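/- arXiv:2601.21290 — 5 statements merged into one kernel-verified Lean document; each statement's English description precedes it below -/
import Mathlib

section
/- If ω : 𝔻 → ℂ is a Schwarz function with Taylor coefficients cₙ = ω⁽ⁿ⁾(0)/n!, then for every complex number λ one has |c₂ + λ c₁²| ≤ max{1, |λ|}. -/
open Complex Metric Set

/-- Key Möbius inequality: if `‖a‖ < 1` and `‖w‖ < 1` then `‖w - a‖ < ‖1 - conj a * w‖`. -/
lemma mobius_key (a w : ℂ) (ha : ‖a‖ < 1) (hw : ‖w‖ < 1) :
    ‖w - a‖ < ‖1 - (starRingEnd ℂ) a * w‖ := by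
  have key : Complex.normSq (1 - (starRingEnd ℂ) a * w) - Complex.normSq (w - a)
      = (1 - Complex.normSq a) * (1 - Complex.normSq w) := by
    simp only [Complex.normSq_apply, Complex.sub_re, Complex.sub_im, Complex.mul_re,
      Complex.mul_im, Complex.one_re, Complex.one_im, Complex.conj_re, Complex.conj_im]
    ring
  have ha2 : Complex.normSq a < 1 := by
    rw [Complex.normSq_eq_norm_sq]; nlinarith [norm_nonneg a]
  have hw2 : Complex.normSq w < 1 := by
    rw [Complex.normSq_eq_norm_sq]; nlinarith [norm_nonneg w]
  have hlt : ‖w - a‖ ^ 2 < ‖1 - (starRingEnd ℂ) a * w‖ ^ 2 := by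
    rw [← Complex.normSq_eq_norm_sq, ← Complex.normSq_eq_norm_sq]
    nlinarith
  exact lt_of_pow_lt_pow_left₀ 2 (norm_nonneg _) hlt

/-- If `ω` is a Schwarz function on the unit disk with Taylor
coefficients `c n = ω⁽ⁿ⁾(0)/n!`, then for every `λ ∈ ℂ`,
`|c₂ + λ c₁²| ≤ max {1, |λ|}`. -/
theorem schwarz_coeff_bound
    (ω : ℂ → ℂ)
    (hωd : DifferentiableOn ℂ ω (ball 0 1))
    (hω0 : ω 0 = 0)
    (hωb : ∀ z ∈ ball (0:ℂ) 1, ‖ω z‖ < 1)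
    (c : ℕ → ℂ) (hc : ∀ n, c n = iteratedDeriv n ω 0 / (n.factorial : ℂ))
    (lam : ℂ) :
    ‖c 2 + lam * (c 1) ^ 2‖ ≤ max 1 ‖lam‖ := by
  have h0 : (0:ℂ) ∈ ball (0:ℂ) 1 := mem_ball_self one_pos
  have hnhds : ball (0:ℂ) 1 ∈ nhds (0:ℂ) := isOpen_ball.mem_nhds h0
  have han : AnalyticAt ℂ ω 0 := hωd.analyticAt hnhds
  obtain ⟨p, hp⟩ := han
  -- coefficients of the power series agree with `c`
  have hcp : ∀ n, c n = p.coeff n := by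
    intro n
    obtain ⟨r, hr⟩ := hp
    have h1 := hr.factorial_smul (1 : ℂ) n
    rw [hc n, iteratedDeriv_eq_iteratedFDeriv, ← h1]
    simp only [FormalMultilinearSeries.coeff, nsmul_eq_mul]
    rw [mul_div_cancel_left₀ _ (Nat.cast_ne_zero.mpr n.factorial_ne_zero : (n.factorial : ℂ) ≠ 0)]
    rfl
  set φ := dslope ω 0 with hφdef
  have hφp : HasFPowerSeriesAt φ p.fslope 0 := hp.has_fpower_series_dslope_fslope
  have hφ0 : φ 0 = c 1 := by
    have := hφp.coeff_zero (fun _ => (1:ℂ))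
    rw [hcp 1, ← p.coeff_fslope]
    exact this.symm
  have hdφ : deriv φ 0 = c 2 := by
    have h1 : deriv φ 0 = p.fslope.coeff 1 := hφp.deriv
    rw [h1, p.coeff_fslope]
    exact (hcp 2).symm
  have hφdiff : DifferentiableOn ℂ φ (ball 0 1) :=
    (differentiableOn_dslope hnhds).mpr hωd
  have hmaps : MapsTo ω (ball (0:ℂ) 1) (ball (ω 0) 1) := by
    intro z hz
    rw [hω0, mem_ball, dist_zero_right]
    exact hωb z hz
  have hφle : ∀ z ∈ ball (0:ℂ) 1, ‖φ z‖ ≤ 1 := by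
    intro z hz
    have := Complex.norm_dslope_le_div_of_mapsTo_ball hωd (hmaps.mono_right ball_subset_closedBall) hz
    simpa using this
  have ha1 : ‖c 1‖ ≤ 1 := by rw [← hφ0]; exact hφle 0 h0
  -- Key claim
  have key : ‖c 2‖ ≤ 1 - ‖c 1‖ ^ 2 := by
    by_cases hstrict : ∀ z ∈ ball (0:ℂ) 1, ‖φ z‖ < 1
    · -- Möbius composition
      set a : ℂ := c 1 with hadef
      have haq : ‖a‖ < 1 := by rw [← hφ0]; exact hstrict 0 h0
      set D : ℂ → ℂ := fun z => 1 - (starRingEnd ℂ) a * φ z with hDdef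
      have hDne : ∀ z ∈ ball (0:ℂ) 1, D z ≠ 0 := by
        intro z hz hzero
        have h1 : ‖(starRingEnd ℂ) a * φ z‖ < 1 := by
          rw [norm_mul, RCLike.norm_conj]
          calc ‖a‖ * ‖φ z‖ ≤ 1 * ‖φ z‖ := by
                exact mul_le_mul_of_nonneg_right haq.le (norm_nonneg _)
            _ = ‖φ z‖ := one_mul _
            _ < 1 := hstrict z hz
        have : (1:ℂ) = (starRingEnd ℂ) a * φ z := by
          have := sub_eq_zero.mp hzero
          exact this
        rw [← this] at h1
        simp at h1
      set h : ℂ → ℂ := fun z => (φ z - a) / D z with hhdef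
      have hh0 : h 0 = 0 := by
        simp only [hhdef, hφ0, hadef, sub_self, zero_div]
      have hhdiff : DifferentiableOn ℂ h (ball 0 1) :=
        (hφdiff.sub_const a).div
          ((differentiableOn_const 1).sub ((differentiableOn_const _).mul hφdiff)) hDne
      have hhmaps : MapsTo h (ball (0:ℂ) 1) (ball (h 0) 1) := by
        intro z hz
        rw [hh0, mem_ball, dist_zero_right]
        have hm := mobius_key a (φ z) haq (hstrict z hz)
        rw [hhdef]
        simp only
        rw [norm_div]
        rw [div_lt_one (lt_of_le_of_lt (norm_nonneg _) hm)]
        exact hm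
      have hder : ‖deriv h 0‖ ≤ 1 := by
        have := Complex.norm_deriv_le_div_of_mapsTo_ball hhdiff (hhmaps.mono_right ball_subset_closedBall) one_pos
        simpa using this
      -- compute deriv h 0
      have hφat : DifferentiableAt ℂ φ 0 := hφdiff.differentiableAt hnhds
      have hD0 : D 0 = 1 - (starRingEnd ℂ) a * a := by rw [hDdef]; simp [hφ0, hadef]
      have hD0ne : D 0 ≠ 0 := hDne 0 h0
      have hN : HasDerivAt (fun z => φ z - a) (deriv φ 0) 0 := by
        simpa using (hφat.hasDerivAt.sub_const a)
      have hDd : HasDerivAt D (-((starRingEnd ℂ) a * deriv φ 0)) 0 := by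
        have : HasDerivAt (fun z => (starRingEnd ℂ) a * φ z)
            ((starRingEnd ℂ) a * deriv φ 0) 0 := hφat.hasDerivAt.const_mul _
        simpa using (this.const_sub 1)
      have hhd : HasDerivAt h
          ((deriv φ 0 * D 0 - (φ 0 - a) * (-((starRingEnd ℂ) a * deriv φ 0))) / D 0 ^ 2) 0 :=
        hN.div hDd hD0ne
      have hval : deriv h 0 = deriv φ 0 / D 0 := by
        rw [hhd.deriv, hφ0]
        field_simp
        ring
      have hconj : (starRingEnd ℂ) a * a = (Complex.normSq a : ℂ) := by
        rw [mul_comm, Complex.mul_conj]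
      have hsq : Complex.normSq a = ‖a‖ ^ 2 := by
        rw [Complex.normSq_eq_norm_sq]
      have hnormD : ‖D 0‖ = 1 - ‖a‖ ^ 2 := by
        rw [hD0, hconj, hsq, ← Complex.ofReal_one, ← Complex.ofReal_sub,
          Complex.norm_real, Real.norm_eq_abs]
        exact abs_of_nonneg (by nlinarith [norm_nonneg a])
      have := hder
      rw [hval, norm_div, hnormD, div_le_one (by nlinarith [norm_nonneg a])] at this
      rw [← hdφ]
      exact this
    · -- maximum attained: φ constant
      push_neg at hstrict
      obtain ⟨z₀, hz₀, hz₀1⟩ := hstrict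
      have hz₀eq : ‖φ z₀‖ = 1 := le_antisymm (hφle z₀ hz₀) hz₀1
      have hmax : IsMaxOn (norm ∘ φ) (ball (0:ℂ) 1) z₀ := by
        intro z hz
        simp only [Function.comp_apply, hz₀eq]
        exact hφle z hz
      have heq : EqOn φ (Function.const ℂ (φ z₀)) (ball (0:ℂ) 1) :=
        Complex.eqOn_of_isPreconnected_of_isMaxOn_norm (convex_ball 0 1).isPreconnected
          isOpen_ball hφdiff hz₀ hmax
      have hderiv0 : deriv φ 0 = 0 := by
        have hev : φ =ᶠ[nhds 0] Function.const ℂ (φ z₀) :=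
          Filter.eventuallyEq_of_mem hnhds heq
        rw [hev.deriv_eq]
        exact deriv_const _ _
      have hc2 : c 2 = 0 := by rw [← hdφ, hderiv0]
      have hc1 : ‖c 1‖ = 1 := by
        rw [← hφ0, heq h0, Function.const_apply, hz₀eq]
      rw [hc2, hc1]
      simp
  -- final arithmetic
  have hM1 : (1:ℝ) ≤ max 1 ‖lam‖ := le_max_left _ _
  have hM2 : ‖lam‖ ≤ max 1 ‖lam‖ := le_max_right _ _
  calc ‖c 2 + lam * (c 1) ^ 2‖ ≤ ‖c 2‖ + ‖lam‖ * ‖c 1‖ ^ 2 := by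
        refine (norm_add_le _ _).trans ?_
        rw [norm_mul, norm_pow]
    _ ≤ max 1 ‖lam‖ := by
        have ht1 : ‖c 1‖ ^ 2 ≤ 1 := by nlinarith [norm_nonneg (c 1)]
        have hp1 : (0:ℝ) ≤ (1 - ‖c 1‖ ^ 2) * (max 1 ‖lam‖ - 1) :=
          mul_nonneg (by linarith) (by linarith)
        have hp2 : (0:ℝ) ≤ ‖c 1‖ ^ 2 * (max 1 ‖lam‖ - ‖lam‖) :=
          mul_nonneg (sq_nonneg _) (by linarith)
        nlinarith
end

section
/- If f is a convex function on 𝔻 with Taylor coefficients aₙ = f⁽ⁿ⁾(0)/n!, then |a₃² − a₄²| ≤ 2. -/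
open Complex Metric Set

section ToeplitzAux

open intervalIntegral Real


lemma coeff_formula (p : ℂ → ℂ) (hp : DifferentiableOn ℂ p (ball 0 1))
    {r : ℝ} (hr0 : 0 < r) (hr1 : r < 1) (n : ℕ) :
    iteratedDeriv n p 0 * (r : ℂ) ^ n =
      (n.factorial : ℂ) * (2 * (π : ℂ))⁻¹ *
        ∫ θ in (0:ℝ)..2 * π, Complex.exp (-(n : ℂ) * θ * I) * p (circleMap 0 r θ) := by
  set R : NNReal := ⟨r, hr0.le⟩ with hR
  have hRr : (R : ℝ) = r := rfl
  have hd : DifferentiableOn ℂ p (closedBall 0 (R:ℝ)) :=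
    hp.mono (by rw [hRr]; exact closedBall_subset_ball hr1)
  have hps : HasFPowerSeriesOnBall p (cauchyPowerSeries p 0 R) 0 R :=
    hd.hasFPowerSeriesOnBall (by rw [← NNReal.coe_pos]; exact hr0)
  have key : iteratedDeriv n p 0 =
      (n.factorial : ℂ) * (cauchyPowerSeries p 0 r n fun _ => (1:ℂ)) := by
    rw [iteratedDeriv_eq_iteratedFDeriv, ← hps.factorial_smul (1:ℂ) n]
    simp [hRr, nsmul_eq_mul]
  rw [key, cauchyPowerSeries_apply]
  have hrne : (r : ℂ) ≠ 0 := by exact_mod_cast hr0.ne'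
  have hint : ∀ θ : ℝ, deriv (circleMap 0 r) θ •
        (((1:ℂ) / (circleMap 0 r θ - 0)) ^ n • (circleMap 0 r θ - 0)⁻¹ • p (circleMap 0 r θ)) =
      (I * (((r:ℂ)) ^ n)⁻¹) * (Complex.exp (-(n : ℂ) * θ * I) * p (circleMap 0 r θ)) := by
    intro θ
    have hz : circleMap 0 r θ = (r : ℂ) * Complex.exp (θ * I) := by simp [circleMap]
    have hexp : Complex.exp ((θ:ℂ) * I) ≠ 0 := Complex.exp_ne_zero _
    have hme : Complex.exp (-(n : ℂ) * θ * I) = (Complex.exp ((θ:ℂ) * I) ^ n)⁻¹ := by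
      rw [← Complex.exp_nat_mul, ← Complex.exp_neg]; ring_nf
    rw [deriv_circleMap, smul_eq_mul, smul_eq_mul, smul_eq_mul, hz, hme]
    field_simp
    simp only [sub_zero, one_div, inv_pow, mul_pow]
    field_simp
  rw [circleIntegral] ; simp only [hint]
  rw [intervalIntegral.integral_const_mul]
  have hπ : (π : ℂ) ≠ 0 := by exact_mod_cast Real.pi_ne_zero
  rw [smul_eq_mul]
  field_simp


lemma vanish_formula (p : ℂ → ℂ) (hp : DifferentiableOn ℂ p (ball 0 1))
    {r : ℝ} (hr0 : 0 < r) (hr1 : r < 1) (m : ℕ) :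
    ∫ θ in (0:ℝ)..2 * π, Complex.exp (((m : ℂ) + 1) * θ * I) * p (circleMap 0 r θ) = 0 := by
  have hsub : closedBall (0:ℂ) r ⊆ ball 0 1 := closedBall_subset_ball hr1
  have hdiff : ∀ z ∈ closedBall (0:ℂ) r, DifferentiableAt ℂ (fun w => w ^ m * p w) z := by
    intro z hz
    have hz1 : z ∈ ball (0:ℂ) 1 := hsub hz
    have : DifferentiableAt ℂ p z := hp.differentiableAt (isOpen_ball.mem_nhds hz1)
    exact (differentiableAt_pow m).mul this
  have hzero : (∮ z in C(0, r), z ^ m * p z) = 0 := by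
    refine Complex.circleIntegral_eq_zero_of_differentiable_on_off_countable hr0.le
      countable_empty (fun z hz => (hdiff z hz).continuousAt.continuousWithinAt)
      (fun z hz => hdiff z (ball_subset_closedBall hz.1))
  have hrne : (r : ℂ) ≠ 0 := by exact_mod_cast hr0.ne'
  have hint : ∀ θ : ℝ, deriv (circleMap 0 r) θ • (circleMap 0 r θ ^ m * p (circleMap 0 r θ)) =
      (I * (r:ℂ) ^ (m + 1)) * (Complex.exp (((m : ℂ) + 1) * θ * I) * p (circleMap 0 r θ)) := by
    intro θ
    have hz : circleMap 0 r θ = (r : ℂ) * Complex.exp (θ * I) := by simp [circleMap]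
    have hme : Complex.exp (((m : ℂ) + 1) * θ * I) = Complex.exp ((θ:ℂ) * I) ^ (m + 1) := by
      rw [← Complex.exp_nat_mul]; push_cast; ring_nf
    rw [deriv_circleMap, smul_eq_mul, hz, hme]
    ring
  rw [circleIntegral] at hzero
  simp only [hint] at hzero
  rw [intervalIntegral.integral_const_mul] at hzero
  have : (I * (r:ℂ) ^ (m+1)) ≠ 0 := mul_ne_zero I_ne_zero (pow_ne_zero _ hrne)
  exact (mul_eq_zero.mp hzero).resolve_left this

lemma carath_bound (p : ℂ → ℂ) (hp : DifferentiableOn ℂ p (ball 0 1)) (hp0 : p 0 = 1)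
    (hre : ∀ z ∈ ball (0:ℂ) 1, 0 < (p z).re) (n : ℕ) :
    ‖iteratedDeriv (n+1) p 0‖ ≤ 2 * (n+1).factorial := by
  have key : ∀ r : ℝ, 0 < r → r < 1 →
      ‖iteratedDeriv (n+1) p 0‖ * r ^ (n+1) ≤ 2 * (n+1).factorial := by
    intro r hr0 hr1
    have hle : (0:ℝ) ≤ 2*π := by positivity
    have hπpos : (0:ℝ) < π := Real.pi_pos
    have hmem : ∀ θ : ℝ, circleMap 0 r θ ∈ ball (0:ℂ) 1 := by
      intro θ
      simp only [mem_ball_zero_iff, norm_circleMap_zero]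
      rw [abs_of_pos hr0]; exact hr1
    have cont : Continuous fun θ : ℝ => p (circleMap 0 r θ) :=
      hp.continuousOn.comp_continuous (continuous_circleMap 0 r) hmem
    have contInt : ∀ k : ℂ, Continuous fun θ : ℝ => Complex.exp (k * θ * I) * p (circleMap 0 r θ) := by
      intro k
      exact (Complex.continuous_exp.comp (by continuity)).mul cont
    -- mean value : ∫ re p = 2π
    have h0 := coeff_formula p hp hr0 hr1 0
    simp only [pow_zero, mul_one, Nat.factorial_zero, Nat.cast_one, one_mul,
      Nat.cast_zero, neg_zero, zero_mul, Complex.exp_zero, iteratedDeriv_zero, hp0] at h0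
    have hK0 : (∫ θ in (0:ℝ)..2*π, p (circleMap 0 r θ)) = 2 * (π:ℂ) := by
      have h2π : (2 * (π:ℂ)) ≠ 0 := by simp [Real.pi_ne_zero]
      field_simp at h0
      linear_combination -h0
    have hint : MeasureTheory.IntegrableOn (fun θ : ℝ => p (circleMap 0 r θ)) (Ioc 0 (2*π)) :=
      cont.integrableOn_Ioc
    have hre_int : (∫ θ in (0:ℝ)..2*π, (p (circleMap 0 r θ)).re) = 2 * π := by
      rw [intervalIntegral.integral_of_le hle]
      have h := integral_re (μ := MeasureTheory.volume.restrict (Ioc 0 (2*π))) hint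
      simp only [RCLike.re_to_complex] at h
      rw [h, ← intervalIntegral.integral_of_le hle, hK0]
      simp
    -- conjugate vanishing
    have ccon : (∫ θ in (0:ℝ)..2*π,
        Complex.exp (-((n:ℂ)+1) * θ * I) * (starRingEnd ℂ) (p (circleMap 0 r θ))) = 0 := by
      have hptw : ∀ θ : ℝ, Complex.exp (-((n:ℂ)+1) * θ * I) * (starRingEnd ℂ) (p (circleMap 0 r θ))
          = (starRingEnd ℂ) (Complex.exp (((n:ℂ)+1) * θ * I) * p (circleMap 0 r θ)) := by
        intro θ
        rw [map_mul, ← Complex.exp_conj]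
        congr 2
        simp [map_mul, Complex.conj_I]
        ring
      simp only [hptw]
      rw [intervalIntegral.integral_of_le hle, integral_conj,
        ← intervalIntegral.integral_of_le hle, vanish_formula p hp hr0 hr1 n, map_zero]
    -- Kn in terms of real part
    have c1 : IntervalIntegrable (fun θ : ℝ => Complex.exp (-((n:ℂ)+1) * θ * I) *
        p (circleMap 0 r θ)) MeasureTheory.volume 0 (2*π) :=
      (contInt _).intervalIntegrable _ _
    have c2 : IntervalIntegrable (fun θ : ℝ => Complex.exp (-((n:ℂ)+1) * θ * I) *
        (starRingEnd ℂ) (p (circleMap 0 r θ))) MeasureTheory.volume 0 (2*π) := by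
      apply Continuous.intervalIntegrable
      exact (Complex.continuous_exp.comp (by continuity)).mul (Complex.continuous_conj.comp cont)
    have hsum : (∫ θ in (0:ℝ)..2*π, Complex.exp (-((n:ℂ)+1) * θ * I) *
            ((2 * (p (circleMap 0 r θ)).re : ℝ) : ℂ))
        = ∫ θ in (0:ℝ)..2*π, Complex.exp (-((n:ℂ)+1) * θ * I) * p (circleMap 0 r θ) := by
      have heq : (fun θ : ℝ => Complex.exp (-((n:ℂ)+1) * θ * I) *
            ((2 * (p (circleMap 0 r θ)).re : ℝ) : ℂ))
          = fun θ : ℝ => Complex.exp (-((n:ℂ)+1) * θ * I) * p (circleMap 0 r θ)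
            + Complex.exp (-((n:ℂ)+1) * θ * I) * (starRingEnd ℂ) (p (circleMap 0 r θ)) := by
        funext θ
        rw [← mul_add, Complex.add_conj]
      rw [heq, intervalIntegral.integral_add c1 c2, ccon, add_zero]
    -- norm bound on Kn
    have hKn : ‖∫ θ in (0:ℝ)..2*π, Complex.exp (-((n:ℂ)+1) * θ * I) * p (circleMap 0 r θ)‖
        ≤ 4 * π := by
      rw [← hsum]
      refine le_trans (intervalIntegral.norm_integral_le_integral_norm hle) ?_
      have hptw : EqOn (fun θ : ℝ => ‖Complex.exp (-((n:ℂ)+1) * θ * I) *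
            ((2 * (p (circleMap 0 r θ)).re : ℝ) : ℂ)‖)
          (fun θ : ℝ => 2 * (p (circleMap 0 r θ)).re) (uIcc 0 (2*π)) := by
        intro θ _
        have hrepos : 0 < (p (circleMap 0 r θ)).re := hre _ (hmem θ)
        simp only [norm_mul]
        have h1 : ‖Complex.exp (-((n:ℂ)+1) * θ * I)‖ = 1 := by
          simp [Complex.norm_exp]
        rw [h1, one_mul, Complex.norm_real, Real.norm_eq_abs, abs_of_pos (by positivity)]
      rw [intervalIntegral.integral_congr hptw, intervalIntegral.integral_const_mul, hre_int]
      nlinarith [hπpos]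
    -- combine
    have hform := coeff_formula p hp hr0 hr1 (n+1)
    simp only [Nat.cast_add, Nat.cast_one] at hform
    have hnorm : ‖iteratedDeriv (n+1) p 0 * (r:ℂ)^(n+1)‖
        = ‖iteratedDeriv (n+1) p 0‖ * r^(n+1) := by
      rw [norm_mul, norm_pow, Complex.norm_real, Real.norm_eq_abs, abs_of_pos hr0]
    have h2π : ‖(2 * (π:ℂ))‖ = 2 * π := by
      rw [norm_mul, Complex.norm_real, Real.norm_eq_abs, abs_of_pos hπpos]
      norm_num
    rw [← hnorm, hform, norm_mul, norm_mul, norm_inv, h2π, Complex.norm_natCast]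
    calc (((n+1).factorial : ℝ)) * (2*π)⁻¹ *
          ‖∫ θ in (0:ℝ)..2*π, Complex.exp (-((n:ℂ)+1) * θ * I) * p (circleMap 0 r θ)‖
        ≤ (((n+1).factorial : ℝ)) * (2*π)⁻¹ * (4*π) := by
          apply mul_le_mul_of_nonneg_left hKn
          positivity
      _ = 2 * (n+1).factorial := by
          field_simp
          ring
  -- limit r → 1⁻
  have htend : Filter.Tendsto (fun r : ℝ => ‖iteratedDeriv (n+1) p 0‖ * r ^ (n+1))
      (nhdsWithin 1 (Iio 1)) (nhds (‖iteratedDeriv (n+1) p 0‖ * 1 ^ (n+1))) := by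
    apply Filter.Tendsto.mono_left _ nhdsWithin_le_nhds
    exact (continuous_const.mul (continuous_pow (n+1))).tendsto 1
  have hev : ∀ᶠ r in nhdsWithin (1:ℝ) (Iio 1),
      ‖iteratedDeriv (n+1) p 0‖ * r ^ (n+1) ≤ 2 * (n+1).factorial := by
    filter_upwards [Ioo_mem_nhdsLT_of_mem (by norm_num : (1:ℝ) ∈ Ioc 0 1)] with r hr
    exact key r hr.1 hr.2
  have := le_of_tendsto htend hev
  simpa using this

end ToeplitzAux

/-- If `f` is a convex function on the unit disk with Taylor
coefficients `a n = f⁽ⁿ⁾(0)/n!`, then `|a₃² − a₄²| ≤ 2`. -/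
theorem toeplitz_T23_convex
    (f : ℂ → ℂ)
    (hfd : DifferentiableOn ℂ f (ball 0 1))
    (hf0 : f 0 = 0) (hf1 : deriv f 0 = 1)
    (hf' : ∀ z ∈ ball (0:ℂ) 1, deriv f z ≠ 0)
    (hcv : ∀ z ∈ ball (0:ℂ) 1,
      0 < (1 + z * iteratedDeriv 2 f z / deriv f z).re)
    (a : ℕ → ℂ) (ha : ∀ n, a n = iteratedDeriv n f 0 / (n.factorial : ℂ)) :
    ‖(a 3)^2 - (a 4)^2‖ ≤ 2 := by
  have h0B : (0:ℂ) ∈ ball (0:ℂ) 1 := by simp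
  have hi2 : iteratedDeriv 2 f = deriv (deriv f) := by
    rw [show (2:ℕ) = 1 + 1 from rfl, iteratedDeriv_succ, iteratedDeriv_one]
  have hi3 : iteratedDeriv 3 f = deriv (deriv (deriv f)) := by
    rw [show (3:ℕ) = 2 + 1 from rfl, iteratedDeriv_succ, hi2]
  have hi4 : iteratedDeriv 4 f = deriv (deriv (deriv (deriv f))) := by
    rw [show (4:ℕ) = 3 + 1 from rfl, iteratedDeriv_succ, hi3]
  have af : AnalyticOnNhd ℂ f (ball 0 1) := hfd.analyticOnNhd isOpen_ball
  set v : ℂ → ℂ := deriv f with hv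
  have av : AnalyticOnNhd ℂ v (ball 0 1) := af.deriv
  have av1 : AnalyticOnNhd ℂ (deriv v) (ball 0 1) := av.deriv
  have av2 : AnalyticOnNhd ℂ (deriv (deriv v)) (ball 0 1) := av1.deriv
  have av3 : AnalyticOnNhd ℂ (deriv (deriv (deriv v))) (ball 0 1) := av2.deriv
  set p : ℂ → ℂ := fun z => 1 + z * deriv v z / v z with hp
  have hdp : DifferentiableOn ℂ p (ball 0 1) := by
    intro z hz
    apply DifferentiableAt.differentiableWithinAt
    exact (differentiableAt_const _).add
      ((differentiableAt_fun_id.mul (av1 z hz).differentiableAt).div (av z hz).differentiableAt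
        (hf' z hz))
  have hp0 : p 0 = 1 := by simp [hp]
  have hrep : ∀ z ∈ ball (0:ℂ) 1, 0 < (p z).re := by
    intro z hz
    have := hcv z hz
    rwa [hi2] at this
  have ap : AnalyticOnNhd ℂ p (ball 0 1) := hdp.analyticOnNhd isOpen_ball
  have aq1 : AnalyticOnNhd ℂ (deriv p) (ball 0 1) := ap.deriv
  have aq2 : AnalyticOnNhd ℂ (deriv (deriv p)) (ball 0 1) := aq1.deriv
  -- the defining identity
  have E : ∀ w ∈ ball (0:ℂ) 1, (p w - 1) * v w = w * deriv v w := by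
    intro w hw
    have hne := hf' w hw
    rw [hp]
    field_simp
    ring
  -- first derivative
  have E1 : ∀ z ∈ ball (0:ℂ) 1,
      deriv p z * v z + (p z - 1) * deriv v z = deriv v z + z * deriv (deriv v) z := by
    intro z hz
    have heq : deriv (fun w => (p w - 1) * v w) z = deriv (fun w => w * deriv v w) z :=
      Filter.EventuallyEq.deriv_eq
        (Filter.eventuallyEq_of_mem (isOpen_ball.mem_nhds hz) (fun w hw => E w hw))
    rw [deriv_fun_mul ((ap z hz).differentiableAt.sub_const 1) (av z hz).differentiableAt,
      deriv_fun_mul differentiableAt_fun_id (av1 z hz).differentiableAt,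
      deriv_sub_const, deriv_id'', one_mul] at heq
    exact heq
  -- second derivative
  have E2 : ∀ z ∈ ball (0:ℂ) 1,
      (deriv (deriv p) z * v z + deriv p z * deriv v z) +
        (deriv p z * deriv v z + (p z - 1) * deriv (deriv v) z)
      = deriv (deriv v) z + (deriv (deriv v) z + z * deriv (deriv (deriv v)) z) := by
    intro z hz
    have heq : deriv (fun w => deriv p w * v w + (p w - 1) * deriv v w) z
        = deriv (fun w => deriv v w + w * deriv (deriv v) w) z :=
      Filter.EventuallyEq.deriv_eq
        (Filter.eventuallyEq_of_mem (isOpen_ball.mem_nhds hz) (fun w hw => E1 w hw))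
    rw [deriv_fun_add ((aq1 z hz).differentiableAt.fun_mul (av z hz).differentiableAt)
        (((ap z hz).differentiableAt.sub_const 1).fun_mul (av1 z hz).differentiableAt),
      deriv_fun_mul (aq1 z hz).differentiableAt (av z hz).differentiableAt,
      deriv_fun_mul ((ap z hz).differentiableAt.sub_const 1) (av1 z hz).differentiableAt,
      deriv_sub_const,
      deriv_fun_add (av1 z hz).differentiableAt
        (differentiableAt_fun_id.fun_mul (av2 z hz).differentiableAt),
      deriv_fun_mul differentiableAt_fun_id (av2 z hz).differentiableAt,
      deriv_id'', one_mul] at heq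
    exact heq
  -- third derivative
  have E3 : ∀ z ∈ ball (0:ℂ) 1,
      ((deriv (deriv (deriv p)) z * v z + deriv (deriv p) z * deriv v z) +
        (deriv (deriv p) z * deriv v z + deriv p z * deriv (deriv v) z)) +
      ((deriv (deriv p) z * deriv v z + deriv p z * deriv (deriv v) z) +
        (deriv p z * deriv (deriv v) z + (p z - 1) * deriv (deriv (deriv v)) z))
      = deriv (deriv (deriv v)) z + (deriv (deriv (deriv v)) z +
          (deriv (deriv (deriv v)) z + z * deriv (deriv (deriv (deriv v))) z)) := by
    intro z hz
    have heq : deriv (fun w => (deriv (deriv p) w * v w + deriv p w * deriv v w) +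
          (deriv p w * deriv v w + (p w - 1) * deriv (deriv v) w)) z
        = deriv (fun w => deriv (deriv v) w + (deriv (deriv v) w +
            w * deriv (deriv (deriv v)) w)) z :=
      Filter.EventuallyEq.deriv_eq
        (Filter.eventuallyEq_of_mem (isOpen_ball.mem_nhds hz) (fun w hw => E2 w hw))
    rw [deriv_fun_add
        (((aq2 z hz).differentiableAt.fun_mul (av z hz).differentiableAt).fun_add
          ((aq1 z hz).differentiableAt.fun_mul (av1 z hz).differentiableAt))
        (((aq1 z hz).differentiableAt.fun_mul (av1 z hz).differentiableAt).fun_add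
          (((ap z hz).differentiableAt.sub_const 1).fun_mul (av2 z hz).differentiableAt)),
      deriv_fun_add ((aq2 z hz).differentiableAt.fun_mul (av z hz).differentiableAt)
        ((aq1 z hz).differentiableAt.fun_mul (av1 z hz).differentiableAt),
      deriv_fun_add ((aq1 z hz).differentiableAt.fun_mul (av1 z hz).differentiableAt)
        (((ap z hz).differentiableAt.sub_const 1).fun_mul (av2 z hz).differentiableAt),
      deriv_fun_mul (aq2 z hz).differentiableAt (av z hz).differentiableAt,
      deriv_fun_mul (aq1 z hz).differentiableAt (av1 z hz).differentiableAt,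
      deriv_fun_mul ((ap z hz).differentiableAt.sub_const 1) (av2 z hz).differentiableAt,
      deriv_sub_const,
      deriv_fun_add (av2 z hz).differentiableAt
        ((av2 z hz).differentiableAt.fun_add
          (differentiableAt_fun_id.fun_mul (av3 z hz).differentiableAt)),
      deriv_fun_add (av2 z hz).differentiableAt
        (differentiableAt_fun_id.fun_mul (av3 z hz).differentiableAt),
      deriv_fun_mul differentiableAt_fun_id (av3 z hz).differentiableAt,
      deriv_id'', one_mul] at heq
    exact heq
  -- coefficient bounds from Caratheodory
  have hip1 : iteratedDeriv 1 p 0 = deriv p 0 := by rw [iteratedDeriv_one]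
  have hip2 : iteratedDeriv 2 p 0 = deriv (deriv p) 0 := by
    rw [show (2:ℕ) = 1 + 1 from rfl, iteratedDeriv_succ, iteratedDeriv_one]
  have hip3 : iteratedDeriv 3 p 0 = deriv (deriv (deriv p)) 0 := by
    rw [show (3:ℕ) = 2 + 1 from rfl, iteratedDeriv_succ,
      show (2:ℕ) = 1 + 1 from rfl, iteratedDeriv_succ, iteratedDeriv_one]
  have hc1 : ‖deriv p 0‖ ≤ 2 := by
    have := carath_bound p hdp hp0 hrep 0
    rw [show (0+1 : ℕ) = 1 from rfl, hip1] at this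
    simpa using this
  have hc2 : ‖deriv (deriv p) 0‖ ≤ 4 := by
    have := carath_bound p hdp hp0 hrep 1
    rw [show (1+1 : ℕ) = 2 from rfl, hip2] at this
    exact le_trans this (by norm_num [Nat.factorial])
  have hc3 : ‖deriv (deriv (deriv p)) 0‖ ≤ 12 := by
    have := carath_bound p hdp hp0 hrep 2
    rw [show (2+1 : ℕ) = 3 from rfl, hip3] at this
    exact le_trans this (by norm_num [Nat.factorial])
  -- evaluate identities at 0
  have hv0 : v 0 = 1 := hf1
  have e1 := E1 0 h0B
  rw [hv0, hp0, mul_one, sub_self, zero_mul, add_zero, zero_mul, add_zero] at e1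
  -- e1 : deriv p 0 = deriv v 0
  have e2 := E2 0 h0B
  rw [hv0, hp0, mul_one, sub_self, zero_mul, add_zero, zero_mul, add_zero] at e2
  -- e2 : deriv² p 0 + 2 deriv p 0 * deriv v 0 = 2 deriv² v 0
  have e3 := E3 0 h0B
  rw [hv0, hp0, mul_one, sub_self, zero_mul, add_zero, zero_mul, add_zero] at e3
  -- bounds on v-derivatives at 0
  have hv1 : ‖deriv v 0‖ ≤ 2 := by rw [← e1]; exact hc1
  -- bound on second derivative of v at 0
  have hv2 : ‖deriv (deriv v) 0‖ ≤ 6 := by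
    have h : deriv (deriv v) 0 * 2 = deriv (deriv p) 0 + 2 * (deriv p 0 * deriv v 0) := by
      linear_combination -e2
    have hn : ‖deriv (deriv v) 0‖ * 2 = ‖deriv (deriv p) 0 + 2 * (deriv p 0 * deriv v 0)‖ := by
      rw [← h, norm_mul]
      norm_num
    have hb : ‖deriv (deriv p) 0 + 2 * (deriv p 0 * deriv v 0)‖
        ≤ ‖deriv (deriv p) 0‖ + 2 * (‖deriv p 0‖ * ‖deriv v 0‖) := by
      refine le_trans (norm_add_le _ _) ?_
      rw [norm_mul, norm_mul]
      norm_num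
    have hq1v1 : ‖deriv p 0‖ * ‖deriv v 0‖ ≤ 2 * 2 :=
      mul_le_mul hc1 hv1 (norm_nonneg _) (by norm_num)
    linarith
  -- bound on third derivative of v at 0
  have hv3 : ‖deriv (deriv (deriv v)) 0‖ ≤ 24 := by
    have h : deriv (deriv (deriv v)) 0 * 3 = deriv (deriv (deriv p)) 0
        + 3 * (deriv (deriv p) 0 * deriv v 0) + 3 * (deriv p 0 * deriv (deriv v) 0) := by
      linear_combination -e3
    have hn : ‖deriv (deriv (deriv v)) 0‖ * 3 = ‖deriv (deriv (deriv p)) 0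
        + 3 * (deriv (deriv p) 0 * deriv v 0) + 3 * (deriv p 0 * deriv (deriv v) 0)‖ := by
      rw [← h, norm_mul]
      norm_num
    have hb : ‖deriv (deriv (deriv p)) 0 + 3 * (deriv (deriv p) 0 * deriv v 0)
          + 3 * (deriv p 0 * deriv (deriv v) 0)‖
        ≤ ‖deriv (deriv (deriv p)) 0‖ + 3 * (‖deriv (deriv p) 0‖ * ‖deriv v 0‖)
          + 3 * (‖deriv p 0‖ * ‖deriv (deriv v) 0‖) := by
      refine le_trans (norm_add_le _ _) (add_le_add ?_ ?_)
      · refine le_trans (norm_add_le _ _) (add_le_add le_rfl ?_)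
        rw [norm_mul, norm_mul]
        norm_num
      · rw [norm_mul, norm_mul]
        norm_num
    have h1 : ‖deriv (deriv p) 0‖ * ‖deriv v 0‖ ≤ 4 * 2 :=
      mul_le_mul hc2 hv1 (norm_nonneg _) (by norm_num)
    have h2 : ‖deriv p 0‖ * ‖deriv (deriv v) 0‖ ≤ 2 * 6 :=
      mul_le_mul hc1 hv2 (norm_nonneg _) (by norm_num)
    linarith
  -- translate to a 3, a 4
  have ha3 : ‖a 3‖ ≤ 1 := by
    rw [ha 3, hi3]
    rw [norm_div]
    have : ‖((3).factorial : ℂ)‖ = 6 := by norm_num [Nat.factorial]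
    rw [this]
    linarith [hv2]
  have ha4 : ‖a 4‖ ≤ 1 := by
    rw [ha 4, hi4]
    rw [norm_div]
    have : ‖((4).factorial : ℂ)‖ = 24 := by norm_num [Nat.factorial]
    rw [this]
    linarith [hv3]
  calc ‖(a 3)^2 - (a 4)^2‖ ≤ ‖(a 3)^2‖ + ‖(a 4)^2‖ := norm_sub_le _ _
    _ = ‖a 3‖^2 + ‖a 4‖^2 := by rw [norm_pow, norm_pow]
    _ ≤ 2 := by nlinarith [norm_nonneg (a 3), norm_nonneg (a 4)]
end

section
/- There exists a convex function f on 𝔻 with Taylor coefficients aₙ = f⁽ⁿ⁾(0)/n! such that |a₃² − a₄²| = 2; in particular, the holomorphic function f on 𝔻 determined by f(0) = 0, f'(0) = 1 and 1 + z f''(z)/f'(z) = (1 + iz)/(1 − iz) is convex and satisfies a₃ = −1, a₄ = −i, hence |a₃² − a₄²| = 2. -/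
open Complex Metric Set

noncomputable def Fcvx : ℂ → ℂ := fun z => z * (1 - I*z)⁻¹

lemma hUopen : IsOpen {z : ℂ | 1 - I*z ≠ 0} := by
  have : Continuous fun z : ℂ => 1 - I*z := by continuity
  exact isOpen_compl_singleton.preimage this

lemma hc {z : ℂ} : HasDerivAt (fun w : ℂ => 1 - I*w) (-I) z := by
  simpa using ((hasDerivAt_id z).const_mul I).const_sub 1

lemma hg (n : ℕ) {z : ℂ} (hz : 1 - I*z ≠ 0) :
    HasDerivAt (fun w : ℂ => ((1 - I*w)^(n+1))⁻¹)
      (((n:ℂ)+1) * I * ((1 - I*z)^(n+2))⁻¹) z := by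
  have h1 : HasDerivAt (fun w : ℂ => (1 - I*w)^(n+1))
      ((((n:ℂ))+1) * (1 - I*z)^n * (-I)) z := by
    simpa using hc.fun_pow (n+1)
  have h2 := h1.fun_inv (pow_ne_zero _ hz)
  refine h2.congr_deriv ?_
  field_simp
  ring

lemma hF {z : ℂ} (hz : 1 - I*z ≠ 0) :
    HasDerivAt Fcvx (((1 - I*z)^2)⁻¹) z := by
  have h1 : HasDerivAt (fun w : ℂ => (1 - I*w)⁻¹) (I * ((1-I*z)^2)⁻¹) z := by
    have := hc.fun_inv hz
    refine this.congr_deriv ?_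
    field_simp
  have h2 := (hasDerivAt_id z).fun_mul h1
  refine h2.congr_deriv ?_
  simp only [id_eq]
  field_simp
  ring

lemma d1 {z : ℂ} (hz : 1 - I*z ≠ 0) : deriv Fcvx z = ((1-I*z)^2)⁻¹ := (hF hz).deriv

lemma d2 {z : ℂ} (hz : 1 - I*z ≠ 0) :
    iteratedDeriv 2 Fcvx z = 2*I*((1-I*z)^3)⁻¹ := by
  rw [iteratedDeriv_succ, iteratedDeriv_one]
  have hev : deriv Fcvx =ᶠ[nhds z] fun w => ((1-I*w)^2)⁻¹ := by
    filter_upwards [hUopen.mem_nhds hz] with w hw using d1 hw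
  rw [hev.deriv_eq]
  have h := (hg 1 hz).deriv
  rw [h]; norm_num

lemma d3 {z : ℂ} (hz : 1 - I*z ≠ 0) :
    iteratedDeriv 3 Fcvx z = -6*((1-I*z)^4)⁻¹ := by
  rw [iteratedDeriv_succ]
  have hev : iteratedDeriv 2 Fcvx =ᶠ[nhds z] fun w => 2*I*((1-I*w)^3)⁻¹ := by
    filter_upwards [hUopen.mem_nhds hz] with w hw using d2 hw
  rw [hev.deriv_eq]
  have h := ((hg 2 hz).const_mul (2*I)).deriv
  rw [h]
  have : (I:ℂ)^2 = -1 := Complex.I_sq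
  push_cast; ring_nf
  rw [Complex.I_sq]; ring

lemma d4 {z : ℂ} (hz : 1 - I*z ≠ 0) :
    iteratedDeriv 4 Fcvx z = -24*I*((1-I*z)^5)⁻¹ := by
  rw [iteratedDeriv_succ]
  have hev : iteratedDeriv 3 Fcvx =ᶠ[nhds z] fun w => -6*((1-I*w)^4)⁻¹ := by
    filter_upwards [hUopen.mem_nhds hz] with w hw using d3 hw
  rw [hev.deriv_eq]
  have h := ((hg 3 hz).const_mul (-6)).deriv
  rw [h]
  push_cast; ring

lemma ball_ne {z : ℂ} (hz : z ∈ ball (0:ℂ) 1) : 1 - I*z ≠ 0 := by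
  rw [mem_ball_zero_iff] at hz
  intro h
  have h1 : (1:ℂ) = I * z := by linear_combination h
  have : ‖(1:ℂ)‖ = ‖I * z‖ := by rw [h1]
  simp [norm_mul] at this
  linarith

/-- The bound `|a₃² − a₄²| ≤ 2` is attained in the class of
convex functions: the convex function determined by `f(0) = 0`, `f'(0) = 1` and
`1 + z f''(z)/f'(z) = (1 + iz)/(1 − iz)` has `a₃ = −1`, `a₄ = −i`, hence
`|a₃² − a₄²| = 2`. -/
theorem toeplitz_T23_convex_sharp :
    ∃ f : ℂ → ℂ,
      DifferentiableOn ℂ f (ball 0 1) ∧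
      f 0 = 0 ∧ deriv f 0 = 1 ∧
      (∀ z ∈ ball (0:ℂ) 1, deriv f z ≠ 0) ∧
      (∀ z ∈ ball (0:ℂ) 1,
        0 < (1 + z * iteratedDeriv 2 f z / deriv f z).re) ∧
      (∀ z ∈ ball (0:ℂ) 1,
        1 + z * iteratedDeriv 2 f z / deriv f z = (1 + I * z) / (1 - I * z)) ∧
      iteratedDeriv 3 f 0 / ((3).factorial : ℂ) = -1 ∧
      iteratedDeriv 4 f 0 / ((4).factorial : ℂ) = -I ∧
      ‖(iteratedDeriv 3 f 0 / ((3).factorial : ℂ))^2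
        - (iteratedDeriv 4 f 0 / ((4).factorial : ℂ))^2‖ = 2 := by
  have h0 : (1 : ℂ) - I*0 ≠ 0 := by simp
  have e3 : iteratedDeriv 3 Fcvx 0 / ((3).factorial : ℂ) = -1 := by
    rw [d3 h0]; norm_num [Nat.factorial]
  have e4 : iteratedDeriv 4 Fcvx 0 / ((4).factorial : ℂ) = -I := by
    rw [d4 h0]; norm_num [Nat.factorial]; field_simp
  have key : ∀ z ∈ ball (0:ℂ) 1,
      1 + z * iteratedDeriv 2 Fcvx z / deriv Fcvx z = (1 + I * z) / (1 - I * z) := by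
    intro z hz
    have h := ball_ne hz
    rw [d1 h, d2 h]
    have h' : (1:ℂ) - z*I ≠ 0 := by rwa [mul_comm] at h
    field_simp
    ring
  refine ⟨Fcvx, ?_, ?_, ?_, ?_, ?_, key, ?_, ?_, ?_⟩
  · intro z hz
    exact (hF (ball_ne hz)).differentiableAt.differentiableWithinAt
  · simp [Fcvx]
  · rw [d1 h0]; norm_num
  · intro z hz
    rw [d1 (ball_ne hz)]
    exact inv_ne_zero (pow_ne_zero _ (ball_ne hz))
  · intro z hz
    rw [key z hz]
    have hz1 : Complex.normSq z < 1 := by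
      rw [mem_ball_zero_iff] at hz
      have h1 := Complex.sq_norm z
      have h2 : ‖z‖ < 1 := hz
      nlinarith [norm_nonneg z]
    have hden : 0 < Complex.normSq (1 - I*z) := Complex.normSq_pos.2 (ball_ne hz)
    rw [Complex.div_re, ← add_div]
    apply div_pos _ hden
    have : Complex.normSq z = z.re^2 + z.im^2 := by rw [Complex.normSq_apply]; ring
    simp only [Complex.add_re, Complex.one_re, Complex.mul_re, Complex.I_re, Complex.I_im,
      Complex.sub_re, Complex.sub_im, Complex.add_im, Complex.one_im, Complex.mul_im]
    nlinarith [hz1, this]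
  · exact e3
  · exact e4
  · rw [e3, e4]
    have h : ((-1:ℂ))^2 - (-I)^2 = 2 := by linear_combination -Complex.I_sq
    rw [h]
    simp
end

section
/- If α ∈ [0,1] and f is a convex function of order α on 𝔻 with Taylor coefficients aₙ = f⁽ⁿ⁾(0)/n!, then |a₃² − a₄²| ≤ (1 − α)²(3 − 2α)²/9 + (1 − α)²(2 − α)²(3 − 2α)²/36. -/
open Complex Metric Set

open MeasureTheory intervalIntegral


lemma cara_key {p : ℂ → ℂ} (hd : DifferentiableOn ℂ p (ball 0 1))
    (hre : ∀ z ∈ ball (0:ℂ) 1, 0 ≤ (p z).re) (m : ℕ) (r : ℝ) (hr0 : 0 < r) (hr1 : r < 1) :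
    ‖iteratedDeriv (m+1) p 0‖ * r ^ (m+1) ≤ 2 * (m+1).factorial * (p 0).re := by
  lift r to NNReal using hr0.le with R hR
  set n := m + 1 with hn
  have hrpos : (0:ℝ) < R := hr0
  have hrne : (R:ℝ) ≠ 0 := hrpos.ne'
  have hsub : closedBall (0:ℂ) R ⊆ ball 0 1 := closedBall_subset_ball hr1
  have hdc : DifferentiableOn ℂ p (closedBall 0 R) := hd.mono hsub
  have hps := hdc.hasFPowerSeriesOnBall (by exact_mod_cast hrpos)
  set Z : ℝ → ℂ := circleMap 0 R with hZ
  have hZne : ∀ θ, Z θ ≠ 0 := fun θ => circleMap_ne_center hrne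
  have hZnorm : ∀ θ, ‖Z θ‖ = R := fun θ => by
    rw [hZ, norm_circleMap_zero, abs_of_pos hrpos]
  have hZmem : ∀ θ, Z θ ∈ ball (0:ℂ) 1 := fun θ => by
    simp only [mem_ball_zero_iff, hZnorm θ]; exact hr1
  have hZball : ∀ θ, Z θ ∈ closedBall (0:ℂ) R := fun θ => circleMap_mem_closedBall _ hrpos.le _
  have hpc : Continuous fun θ => p (Z θ) :=
    hd.continuousOn.comp_continuous (continuous_circleMap 0 R) hZmem
  have hAc : Continuous fun θ => (Z θ)⁻¹ ^ n :=
    ((continuous_circleMap 0 R).inv₀ hZne).pow n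
  have hZc : Continuous Z := continuous_circleMap 0 R
  -- the interval integrals
  set K := ∫ θ in (0:ℝ)..2*Real.pi, (Z θ)⁻¹ ^ n * p (Z θ) with hK
  set L := ∫ θ in (0:ℝ)..2*Real.pi, (Z θ) ^ n * p (Z θ) with hL
  set M := ∫ θ in (0:ℝ)..2*Real.pi, (Z θ)⁻¹ ^ n * (starRingEnd ℂ) (p (Z θ)) with hM
  -- coefficient identity
  have hco : iteratedDeriv n p 0 = ((n.factorial : ℝ) / (2*Real.pi) : ℝ) * K := by
    have h1 := hps.factorial_smul (1:ℂ) n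
    rw [cauchyPowerSeries_apply] at h1
    have h2 : iteratedDeriv n p 0 = iteratedFDeriv ℂ n p 0 fun _ => 1 :=
      iteratedDeriv_eq_iteratedFDeriv
    rw [h2, ← h1]
    have hJ : (∮ z in C(0, (R:ℝ)), ((1:ℂ)/(z-0)) ^ n • (z-0)⁻¹ • p z) = I * K := by
      rw [hK, ← intervalIntegral.integral_const_mul]
      simp only [circleIntegral, deriv_circleMap, sub_zero, smul_eq_mul]
      refine intervalIntegral.integral_congr fun θ _ => ?_
      have h := hZne θ
      rw [← hZ]
      field_simp
    rw [hJ]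
    have hpi : (Real.pi : ℂ) ≠ 0 := by exact_mod_cast Real.pi_ne_zero
    rw [nsmul_eq_mul]
    push_cast
    field_simp [Complex.I_ne_zero]
    rw [smul_eq_mul, show (n.factorial : ℂ) * 2 * (Real.pi : ℂ) * (1 / (2 * (Real.pi : ℂ) * I) * (I * K)) = (n.factorial : ℂ) * K * ((2 * (Real.pi : ℂ) * I) * (2 * (Real.pi : ℂ) * I)⁻¹) by ring, mul_inv_cancel₀ (by simp [hpi, Complex.I_ne_zero]), mul_one]
  -- the "negative" coefficient vanishes
  have hLzero : L = 0 := by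
    have hz : (∮ z in C(0, (R:ℝ)), z ^ m * p z) = 0 := by
      refine circleIntegral_eq_zero_of_differentiable_on_off_countable hrpos.le
        countable_empty ((continuous_pow m).continuousOn.mul hdc.continuousOn) fun z hz => ?_
      exact (differentiable_pow m).differentiableAt.mul
        (hd.differentiableAt (isOpen_ball.mem_nhds (hsub (ball_subset_closedBall hz.1))))
    have hz2 : (∮ z in C(0, (R:ℝ)), z ^ m * p z) = I * L := by
      rw [hL, ← intervalIntegral.integral_const_mul]
      simp only [circleIntegral, deriv_circleMap, smul_eq_mul]
      refine intervalIntegral.integral_congr fun θ _ => ?_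
      rw [← hZ, hn, pow_succ]
      ring
    rw [hz2] at hz
    exact (mul_eq_zero.mp hz).resolve_left Complex.I_ne_zero
  -- conjugation: M = 0
  have hMzero : M = 0 := by
    have hconjL : (starRingEnd ℂ) L = ((R:ℝ):ℂ) ^ (2*n) * M := by
      rw [hL, intervalIntegral.integral_of_le Real.two_pi_pos.le,
        ← integral_conj, hM, intervalIntegral.integral_of_le Real.two_pi_pos.le,
        ← MeasureTheory.integral_const_mul]
      refine MeasureTheory.integral_congr_ae (Filter.Eventually.of_forall fun θ => ?_)
      have h1 : (starRingEnd ℂ) (Z θ) = ((R:ℝ):ℂ)^2 * (Z θ)⁻¹ := by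
        have := Complex.mul_conj (Z θ)
        rw [Complex.normSq_eq_norm_sq, hZnorm θ] at this
        field_simp [hZne θ]
        rw [mul_comm] at this
        rw [this]
        push_cast
        ring
      show (starRingEnd ℂ) (Z θ ^ n * p (Z θ))
        = ((R:ℝ):ℂ) ^ (2*n) * ((Z θ)⁻¹ ^ n * (starRingEnd ℂ) (p (Z θ)))
      rw [map_mul, map_pow, h1, mul_pow, ← pow_mul, mul_comm 2 n, pow_mul]
      ring
    rw [hLzero, map_zero] at hconjL
    have hRn : (((R:ℝ):ℂ)) ^ (2*n) ≠ 0 := pow_ne_zero _ (by exact_mod_cast hrne)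
    exact (mul_eq_zero.mp hconjL.symm).resolve_left hRn
  -- mean value: ∫ p = 2π p 0
  have hmean : ∫ θ in (0:ℝ)..2*Real.pi, p (Z θ) = (2*Real.pi : ℝ) * p 0 := by
    have hc := circleIntegral_sub_center_inv_smul_of_differentiable_on_off_countable
      hrpos countable_empty hdc.continuousOn
      (fun z hz => hd.differentiableAt (isOpen_ball.mem_nhds (hsub (ball_subset_closedBall hz.1))))
    have hc2 : (∮ z in C(0, (R:ℝ)), (z - 0)⁻¹ • p z)
        = I * ∫ θ in (0:ℝ)..2*Real.pi, p (Z θ) := by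
      rw [← intervalIntegral.integral_const_mul]
      simp only [circleIntegral, deriv_circleMap, sub_zero, smul_eq_mul]
      refine intervalIntegral.integral_congr fun θ _ => ?_
      rw [← hZ]
      field_simp [hZne θ]
    rw [hc2, smul_eq_mul] at hc
    have := mul_left_cancel₀ Complex.I_ne_zero (by rw [hc]; ring_nf : I * (∫ θ in (0:ℝ)..2*Real.pi, p (Z θ)) = I * (2 * (Real.pi:ℂ) * p 0))
    rw [this]
    push_cast
    ring
  -- rewrite K using the real part
  have hKre : K = ∫ θ in (0:ℝ)..2*Real.pi,
      (Z θ)⁻¹ ^ n * ((2 * (p (Z θ)).re : ℝ) : ℂ) := by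
    have hint1 : IntervalIntegrable (fun θ => (Z θ)⁻¹ ^ n * p (Z θ)) volume 0 (2*Real.pi) :=
      (hAc.mul hpc).intervalIntegrable _ _
    have hint2 : IntervalIntegrable (fun θ => (Z θ)⁻¹ ^ n * (starRingEnd ℂ) (p (Z θ)))
        volume 0 (2*Real.pi) :=
      (hAc.mul (Complex.continuous_conj.comp hpc)).intervalIntegrable _ _
    calc K = K + M := by rw [hMzero, add_zero]
    _ = ∫ θ in (0:ℝ)..2*Real.pi,
        ((Z θ)⁻¹ ^ n * p (Z θ) + (Z θ)⁻¹ ^ n * (starRingEnd ℂ) (p (Z θ))) := by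
      rw [hK, hM, intervalIntegral.integral_add hint1 hint2]
    _ = _ := by
      refine intervalIntegral.integral_congr fun θ _ => ?_
      rw [← mul_add, Complex.add_conj]
  -- norm bound on K
  have hmre : ∫ θ in (0:ℝ)..2*Real.pi, (p (Z θ)).re = 2*Real.pi * (p 0).re := by
    have h1 : (∫ θ in (0:ℝ)..2*Real.pi, p (Z θ)).re = 2*Real.pi * (p 0).re := by
      rw [hmean, Complex.re_ofReal_mul]
    rw [← h1, intervalIntegral.integral_of_le Real.two_pi_pos.le,
      intervalIntegral.integral_of_le Real.two_pi_pos.le]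
    have hint : MeasureTheory.Integrable (fun θ => p (Z θ))
        (MeasureTheory.volume.restrict (Ioc (0:ℝ) (2*Real.pi))) :=
      (hpc.integrableOn_Ioc)
    simpa using integral_re hint
  have hnormK : ‖K‖ ≤ ((R:ℝ)⁻¹) ^ n * (2 * (2*Real.pi * (p 0).re)) := by
    rw [hKre]
    calc ‖∫ θ in (0:ℝ)..2*Real.pi, (Z θ)⁻¹ ^ n * ((2 * (p (Z θ)).re : ℝ) : ℂ)‖
        ≤ ∫ θ in (0:ℝ)..2*Real.pi, ‖(Z θ)⁻¹ ^ n * ((2 * (p (Z θ)).re : ℝ) : ℂ)‖ :=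
      intervalIntegral.norm_integral_le_integral_norm Real.two_pi_pos.le
    _ = ∫ θ in (0:ℝ)..2*Real.pi, ((R:ℝ)⁻¹) ^ n * (2 * (p (Z θ)).re) := by
      refine intervalIntegral.integral_congr fun θ _ => ?_
      rw [norm_mul, norm_pow, norm_inv, hZnorm θ, Complex.norm_real,
        Real.norm_eq_abs, _root_.abs_of_nonneg (by have := hre _ (hZmem θ); positivity)]
    _ = ((R:ℝ)⁻¹) ^ n * (2 * (2*Real.pi * (p 0).re)) := by
      simp_rw [mul_assoc]
      rw [intervalIntegral.integral_const_mul, intervalIntegral.integral_const_mul, hmre]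
      ring
  have hp0 : 0 ≤ (p 0).re := hre 0 (mem_ball_self one_pos)
  have hfact : ‖iteratedDeriv n p 0‖ = n.factorial / (2*Real.pi) * ‖K‖ := by
    rw [hco, norm_mul, Complex.norm_real, Real.norm_eq_abs,
      _root_.abs_of_nonneg (by positivity)]
  rw [hfact]
  calc (↑n.factorial / (2*Real.pi) * ‖K‖) * (R:ℝ)^n
      ≤ (↑n.factorial / (2*Real.pi) * (((R:ℝ)⁻¹)^n * (2*(2*Real.pi*(p 0).re)))) * (R:ℝ)^n := by
        gcongr
  _ = 2 * n.factorial * (p 0).re := by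
        rw [inv_pow]
        field_simp

lemma cara {p : ℂ → ℂ} (hd : DifferentiableOn ℂ p (ball 0 1))
    (hre : ∀ z ∈ ball (0:ℂ) 1, 0 ≤ (p z).re) (m : ℕ) :
    ‖iteratedDeriv (m+1) p 0‖ ≤ 2 * (m+1).factorial * (p 0).re := by
  have h : ∀ r ∈ Ioo (0:ℝ) 1,
      ‖iteratedDeriv (m+1) p 0‖ * r ^ (m+1) ≤ 2 * (m+1).factorial * (p 0).re :=
    fun r hr => cara_key hd hre m r hr.1 hr.2
  have ht : Filter.Tendsto (fun r : ℝ => ‖iteratedDeriv (m+1) p 0‖ * r ^ (m+1))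
      (nhdsWithin 1 (Iio 1)) (nhds (‖iteratedDeriv (m+1) p 0‖ * 1 ^ (m+1))) :=
    ((continuous_const.mul (continuous_pow _)).tendsto 1).mono_left nhdsWithin_le_nhds
  have hle := le_of_tendsto ht (Filter.eventually_iff_exists_mem.mpr
    ⟨Ioo 0 1, Ioo_mem_nhdsLT_of_mem ⟨by norm_num, le_refl 1⟩, h⟩)
  simpa using hle


/-- If `α ∈ [0,1]` and `f` is convex of order `α` on the unit
disk, then `|a₃² − a₄²| ≤ (1−α)²(3−2α)²/9 + (1−α)²(2−α)²(3−2α)²/36`. -/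
theorem toeplitz_T23_convex_order
    (α : ℝ) (hα0 : 0 ≤ α) (hα1 : α ≤ 1)
    (f : ℂ → ℂ)
    (hfd : DifferentiableOn ℂ f (ball 0 1))
    (hf0 : f 0 = 0) (hf1 : deriv f 0 = 1)
    (hf' : ∀ z ∈ ball (0:ℂ) 1, deriv f z ≠ 0)
    (hcv : ∀ z ∈ ball (0:ℂ) 1,
      α < (1 + z * iteratedDeriv 2 f z / deriv f z).re)
    (a : ℕ → ℂ) (ha : ∀ n, a n = iteratedDeriv n f 0 / (n.factorial : ℂ)) :
    ‖(a 3)^2 - (a 4)^2‖ ≤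
      (1 - α)^2 * (3 - 2*α)^2 / 9
        + (1 - α)^2 * (2 - α)^2 * (3 - 2*α)^2 / 36 := by
  have hsOpen : IsOpen (ball (0:ℂ) 1) := isOpen_ball
  have h0s : (0:ℂ) ∈ ball (0:ℂ) 1 := mem_ball_self one_pos
  have hfa : AnalyticOnNhd ℂ f (ball 0 1) := hfd.analyticOnNhd hsOpen
  set g : ℂ → ℂ := deriv f with hgdef
  have hga : AnalyticOnNhd ℂ g (ball 0 1) := hfa.deriv
  set g1 : ℂ → ℂ := deriv g with hg1def
  have hg1a : AnalyticOnNhd ℂ g1 (ball 0 1) := hga.deriv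
  set g2 : ℂ → ℂ := deriv g1 with hg2def
  have hg2a : AnalyticOnNhd ℂ g2 (ball 0 1) := hg1a.deriv
  set g3 : ℂ → ℂ := deriv g2 with hg3def
  have hg3a : AnalyticOnNhd ℂ g3 (ball 0 1) := hg2a.deriv
  set g4 : ℂ → ℂ := deriv g3 with hg4def
  -- iterated derivatives of f in terms of g's
  have hf2 : iteratedDeriv 2 f = g1 := by
    rw [show (2:ℕ) = 1+1 from rfl, iteratedDeriv_succ, iteratedDeriv_one, hg1def, hgdef]
  have hf3 : iteratedDeriv 3 f 0 = g2 0 := by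
    rw [show (3:ℕ) = 2+1 from rfl, iteratedDeriv_succ, hf2, hg2def]
  have hf4 : iteratedDeriv 4 f 0 = g3 0 := by
    rw [show (4:ℕ) = 3+1 from rfl, iteratedDeriv_succ]
    rw [show (3:ℕ) = 2+1 from rfl, iteratedDeriv_succ, hf2, hg3def, hg2def]
  -- the function q
  set q : ℂ → ℂ := fun z => z * g1 z / g z with hqdef
  have hqa : AnalyticOnNhd ℂ q (ball 0 1) := (analyticOnNhd_id.mul hg1a).div hga hf'
  set q1 : ℂ → ℂ := deriv q with hq1def
  have hq1a : AnalyticOnNhd ℂ q1 (ball 0 1) := hqa.deriv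
  set q2 : ℂ → ℂ := deriv q1 with hq2def
  have hq2a : AnalyticOnNhd ℂ q2 (ball 0 1) := hq1a.deriv
  set q3 : ℂ → ℂ := deriv q2 with hq3def
  have hq0 : q 0 = 0 := by rw [hqdef]; simp
  have hg0 : g 0 = 1 := hf1
  -- Caratheodory bounds on derivatives of q at 0
  have hQ : ∀ m : ℕ, ‖iteratedDeriv (m+1) q 0‖ ≤ 2 * (m+1).factorial * (1 - α) := by
    intro m
    set P : ℂ → ℂ := fun z => q z + ((1 - α : ℝ) : ℂ) with hPdef
    have hPd : DifferentiableOn ℂ P (ball 0 1) := fun z hz =>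
      (((hqa z hz).differentiableAt.add_const _).differentiableWithinAt)
    have hPre : ∀ z ∈ ball (0:ℂ) 1, 0 ≤ (P z).re := by
      intro z hz
      have h := hcv z hz
      rw [hf2] at h
      have : (1 + z * g1 z / g z).re = 1 + (q z).re := by
        rw [hqdef]; simp [mul_div_assoc]
      rw [this] at h
      rw [hPdef]
      simp only [Complex.add_re, Complex.ofReal_re]
      linarith
    have hP0re : (P 0).re = 1 - α := by rw [hPdef]; simp [hq0]
    have h := cara hPd hPre m
    rw [hP0re] at h
    have hiter : iteratedDeriv (m+1) P 0 = iteratedDeriv (m+1) q 0 := by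
      rw [iteratedDeriv_succ', iteratedDeriv_succ']
      congr 1
      funext z
      rw [hPdef]
      exact deriv_add_const _
    rwa [hiter] at h
  -- the key identity q * g = z * g1 on the ball
  have hEq : Set.EqOn (fun z => q z * g z) (fun z => z * g1 z) (ball 0 1) := by
    intro z hz
    have hgne : g z ≠ 0 := hf' z hz
    rw [hqdef]
    field_simp
  -- chains of derivatives
  set F : ℂ → ℂ := fun z => q z * g z with hFdef
  set F1 : ℂ → ℂ := fun z => q1 z * g z + q z * g1 z with hF1def
  set F2 : ℂ → ℂ := fun z => q2 z * g z + 2*(q1 z * g1 z) + q z * g2 z with hF2def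
  set F3 : ℂ → ℂ := fun z =>
    q3 z * g z + 3*(q2 z * g1 z) + 3*(q1 z * g2 z) + q z * g3 z with hF3def
  set G : ℂ → ℂ := fun z => z * g1 z with hGdef
  set G1 : ℂ → ℂ := fun z => g1 z + z * g2 z with hG1def
  set G2 : ℂ → ℂ := fun z => 2*g2 z + z * g3 z with hG2def
  set G3 : ℂ → ℂ := fun z => 3*g3 z + z * g4 z with hG3def
  have hDF : Set.EqOn (deriv F) F1 (ball 0 1) := fun z hz => by
    rw [hFdef, hF1def, deriv_fun_mul (hqa z hz).differentiableAt (hga z hz).differentiableAt,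
      hq1def, hg1def]
  have hDF1 : Set.EqOn (deriv F1) F2 (ball 0 1) := fun z hz => by
    rw [hF1def, hF2def,
      deriv_fun_add ((hq1a z hz).differentiableAt.fun_mul (hga z hz).differentiableAt)
        ((hqa z hz).differentiableAt.fun_mul (hg1a z hz).differentiableAt),
      deriv_fun_mul (hq1a z hz).differentiableAt (hga z hz).differentiableAt,
      deriv_fun_mul (hqa z hz).differentiableAt (hg1a z hz).differentiableAt,
      hq2def, hq1def, hg2def, hg1def]
    ring
  have hDF2 : Set.EqOn (deriv F2) F3 (ball 0 1) := fun z hz => by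
    rw [hF2def, hF3def,
      deriv_fun_add
        (((hq2a z hz).differentiableAt.fun_mul (hga z hz).differentiableAt).fun_add
          (((hq1a z hz).differentiableAt.fun_mul (hg1a z hz).differentiableAt).const_mul 2))
        ((hqa z hz).differentiableAt.fun_mul (hg2a z hz).differentiableAt),
      deriv_fun_add ((hq2a z hz).differentiableAt.fun_mul (hga z hz).differentiableAt)
        (((hq1a z hz).differentiableAt.fun_mul (hg1a z hz).differentiableAt).const_mul 2),
      deriv_fun_mul (hq2a z hz).differentiableAt (hga z hz).differentiableAt,
      deriv_const_mul 2 ((hq1a z hz).differentiableAt.fun_mul (hg1a z hz).differentiableAt),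
      deriv_fun_mul (hq1a z hz).differentiableAt (hg1a z hz).differentiableAt,
      deriv_fun_mul (hqa z hz).differentiableAt (hg2a z hz).differentiableAt,
      hq3def, hq2def, hq1def, hg3def, hg2def, hg1def]
    ring
  have hDG : Set.EqOn (deriv G) G1 (ball 0 1) := fun z hz => by
    rw [hGdef, hG1def, deriv_fun_mul differentiableAt_fun_id (hg1a z hz).differentiableAt,
      deriv_id'', hg2def]
    ring
  have hDG1 : Set.EqOn (deriv G1) G2 (ball 0 1) := fun z hz => by
    rw [hG1def, hG2def,
      deriv_fun_add (hg1a z hz).differentiableAt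
        (differentiableAt_fun_id.fun_mul (hg2a z hz).differentiableAt),
      deriv_fun_mul differentiableAt_fun_id (hg2a z hz).differentiableAt,
      deriv_id'', hg3def, hg2def]
    ring
  have hDG2 : Set.EqOn (deriv G2) G3 (ball 0 1) := fun z hz => by
    rw [hG2def, hG3def,
      deriv_fun_add ((hg2a z hz).differentiableAt.const_mul 2)
        (differentiableAt_fun_id.fun_mul (hg3a z hz).differentiableAt),
      deriv_const_mul 2 (hg2a z hz).differentiableAt,
      deriv_fun_mul differentiableAt_fun_id (hg3a z hz).differentiableAt,
      deriv_id'', hg4def, hg3def]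
    ring
  -- second level EqOn
  have hDDF : Set.EqOn (deriv (deriv F)) F2 (ball 0 1) := fun z hz => by
    rw [(hDF.eventuallyEq_of_mem (hsOpen.mem_nhds hz)).deriv_eq]
    exact hDF1 hz
  have hDDG : Set.EqOn (deriv (deriv G)) G2 (ball 0 1) := fun z hz => by
    rw [(hDG.eventuallyEq_of_mem (hsOpen.mem_nhds hz)).deriv_eq]
    exact hDG1 hz
  -- iterated derivatives at 0
  have eF1 : iteratedDeriv 1 F 0 = F1 0 := by rw [iteratedDeriv_one]; exact hDF h0s
  have eF2 : iteratedDeriv 2 F 0 = F2 0 := by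
    rw [show (2:ℕ) = 1+1 from rfl, iteratedDeriv_succ, iteratedDeriv_one,
      (hDF.eventuallyEq_of_mem (hsOpen.mem_nhds h0s)).deriv_eq]
    exact hDF1 h0s
  have eF3 : iteratedDeriv 3 F 0 = F3 0 := by
    rw [show (3:ℕ) = 1+1+1 from rfl, iteratedDeriv_succ, iteratedDeriv_succ, iteratedDeriv_one,
      (hDDF.eventuallyEq_of_mem (hsOpen.mem_nhds h0s)).deriv_eq]
    exact hDF2 h0s
  have eG1 : iteratedDeriv 1 G 0 = G1 0 := by rw [iteratedDeriv_one]; exact hDG h0s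
  have eG2 : iteratedDeriv 2 G 0 = G2 0 := by
    rw [show (2:ℕ) = 1+1 from rfl, iteratedDeriv_succ, iteratedDeriv_one,
      (hDG.eventuallyEq_of_mem (hsOpen.mem_nhds h0s)).deriv_eq]
    exact hDG1 h0s
  have eG3 : iteratedDeriv 3 G 0 = G3 0 := by
    rw [show (3:ℕ) = 1+1+1 from rfl, iteratedDeriv_succ, iteratedDeriv_succ, iteratedDeriv_one,
      (hDDG.eventuallyEq_of_mem (hsOpen.mem_nhds h0s)).deriv_eq]
    exact hDG2 h0s
  have hFG : ∀ k : ℕ, iteratedDeriv k F 0 = iteratedDeriv k G 0 := fun k =>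
    (hEq.eventuallyEq_of_mem (hsOpen.mem_nhds h0s)).iteratedDeriv_eq k
  -- coefficient identities
  have id1 : g1 0 = q1 0 := by
    have h := (hFG 1).symm.trans eF1
    rw [eG1, hG1def, hF1def] at h
    simp only [hq0, hg0] at h
    linear_combination h
  have id2 : (2:ℂ) * g2 0 = q2 0 + 2 * (q1 0 * g1 0) := by
    have h := (hFG 2).symm.trans eF2
    rw [eG2, hG2def, hF2def] at h
    simp only [hq0, hg0] at h
    linear_combination h
  have id3 : (3:ℂ) * g3 0 = q3 0 + 3 * (q2 0 * g1 0) + 3 * (q1 0 * g2 0) := by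
    have h := (hFG 3).symm.trans eF3
    rw [eG3, hG3def, hF3def] at h
    simp only [hq0, hg0] at h
    linear_combination h
  -- norm bounds on q-derivatives at 0
  have ht0 : (0:ℝ) ≤ 1 - α := by linarith
  have hx1 : ‖q1 0‖ ≤ 2*(1-α) := by
    have h := hQ 0
    simp only [Nat.zero_add, iteratedDeriv_one, Nat.factorial_one, Nat.cast_one] at h
    rw [hq1def]
    linarith
  have hx2 : ‖q2 0‖ ≤ 4*(1-α) := by
    have h := hQ 1
    have e : iteratedDeriv (1+1) q 0 = q2 0 := by
      rw [iteratedDeriv_succ, iteratedDeriv_one, hq2def, hq1def]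
    rw [e] at h
    norm_num [Nat.factorial] at h
    linarith
  have hx3 : ‖q3 0‖ ≤ 12*(1-α) := by
    have h := hQ 2
    have e : iteratedDeriv (2+1) q 0 = q3 0 := by
      rw [iteratedDeriv_succ, show (2:ℕ) = 1+1 from rfl, iteratedDeriv_succ, iteratedDeriv_one,
        hq3def, hq2def, hq1def]
    rw [e] at h
    norm_num [Nat.factorial] at h
    linarith
  have hy1 : ‖g1 0‖ ≤ 2*(1-α) := by rw [id1]; exact hx1
  have hy2 : ‖g2 0‖ ≤ 2*(1-α) + 4*(1-α)^2 := by
    have h2 : ‖(2:ℂ) * g2 0‖ ≤ ‖q2 0‖ + 2*(‖q1 0‖ * ‖g1 0‖) := by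
      rw [id2]
      refine (norm_add_le _ _).trans ?_
      rw [norm_mul, norm_mul, RCLike.norm_ofNat]
    rw [norm_mul, RCLike.norm_two] at h2
    have m1 : ‖q1 0‖ * ‖g1 0‖ ≤ (2*(1-α))*(2*(1-α)) :=
      mul_le_mul hx1 hy1 (norm_nonneg _) (by linarith)
    nlinarith [h2, hx2, m1]
  have hy3 : ‖g3 0‖ ≤ 4*(1-α) + 12*(1-α)^2 + 8*(1-α)^3 := by
    have h3 : ‖(3:ℂ) * g3 0‖ ≤ ‖q3 0‖ + 3*(‖q2 0‖ * ‖g1 0‖) + 3*(‖q1 0‖ * ‖g2 0‖) := by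
      rw [id3]
      refine (norm_add₃_le).trans ?_
      rw [norm_mul, norm_mul, norm_mul, norm_mul, RCLike.norm_ofNat]
    rw [norm_mul, RCLike.norm_ofNat] at h3
    have m2 : ‖q2 0‖ * ‖g1 0‖ ≤ (4*(1-α))*(2*(1-α)) :=
      mul_le_mul hx2 hy1 (norm_nonneg _) (by linarith)
    have m3 : ‖q1 0‖ * ‖g2 0‖ ≤ (2*(1-α))*(2*(1-α) + 4*(1-α)^2) :=
      mul_le_mul hx1 hy2 (norm_nonneg _) (by linarith)
    nlinarith [h3, hx3, m2, m3]
  -- translate to a 3 and a 4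
  have ha3 : a 3 = g2 0 / ((6:ℕ):ℂ) := by
    rw [ha 3, hf3, show Nat.factorial 3 = 6 from rfl]
  have ha4 : a 4 = g3 0 / ((24:ℕ):ℂ) := by
    rw [ha 4, hf4, show Nat.factorial 4 = 24 from rfl]
  have hna3 : ‖a 3‖ ≤ (2*(1-α) + 4*(1-α)^2)/6 := by
    rw [ha3, norm_div, Complex.norm_natCast]
    push_cast
    gcongr
  have hna4 : ‖a 4‖ ≤ (4*(1-α) + 12*(1-α)^2 + 8*(1-α)^3)/24 := by
    rw [ha4, norm_div, Complex.norm_natCast]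
    push_cast
    gcongr
  calc ‖a 3 ^ 2 - a 4 ^ 2‖ ≤ ‖a 3 ^ 2‖ + ‖a 4 ^ 2‖ := norm_sub_le _ _
  _ = ‖a 3‖^2 + ‖a 4‖^2 := by rw [norm_pow, norm_pow]
  _ ≤ ((2*(1-α) + 4*(1-α)^2)/6)^2 + ((4*(1-α) + 12*(1-α)^2 + 8*(1-α)^3)/24)^2 :=
    add_le_add (pow_le_pow_left₀ (norm_nonneg _) hna3 2)
      (pow_le_pow_left₀ (norm_nonneg _) hna4 2)
  _ = (1 - α)^2 * (3 - 2*α)^2 / 9 + (1 - α)^2 * (2 - α)^2 * (3 - 2*α)^2 / 36 := by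
    ring
end

section
/- If β ∈ [2/3, 1] and f is a strongly convex function of order β on 𝔻 with Taylor coefficients aₙ = f⁽ⁿ⁾(0)/n!, then |a₃² − a₄²| ≤ β⁴ + β²(1 + 17β²)²/324. -/
open Complex Metric Set

set_option maxHeartbeats 1000000 in
lemma key_ineq (b t s r : ℝ) (hb0 : 2/3 ≤ b) (hb1 : b ≤ 1)
    (ht0 : 0 ≤ t) (ht1 : t ≤ 1) (hs0 : 0 ≤ s) (hs : s ≤ 1 - t^2)
    (hr0 : 0 ≤ r) (hr : r ≤ 1 - t^2) :
    (b*s/3 + b^2*t^2)^2 + ((3*b*r + 15*b^2*t*s + b*(1+17*b^2)*t^3)/18)^2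
      ≤ b^4 + b^2*(1+17*b^2)^2/324 := by
  have hb : (0:ℝ) < b := by linarith
  have hu0 : (0:ℝ) ≤ 1 - t^2 := le_trans hs0 hs
  have hA : b*s/3 + b^2*t^2 ≤ b*(1-t^2)/3 + b^2*t^2 := by nlinarith
  have hA0 : 0 ≤ b*s/3 + b^2*t^2 := by positivity
  have hts : 15*b^2*t*s ≤ 15*b^2*t*(1-t^2) := by nlinarith [mul_le_mul_of_nonneg_left hs ht0]
  have hB : (3*b*r + 15*b^2*t*s + b*(1+17*b^2)*t^3)/18
      ≤ (3*b*(1-t^2) + 15*b^2*t*(1-t^2) + b*(1+17*b^2)*t^3)/18 := by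
    have h2 : 3*b*r ≤ 3*b*(1-t^2) := by nlinarith
    linarith
  have hB0 : 0 ≤ (3*b*r + 15*b^2*t*s + b*(1+17*b^2)*t^3)/18 := by positivity
  have step : (b*(1-t^2)/3 + b^2*t^2)^2 + ((3*b*(1-t^2) + 15*b^2*t*(1-t^2) + b*(1+17*b^2)*t^3)/18)^2
      ≤ b^4 + b^2*(1+17*b^2)^2/324 := by
    have q1 : (0:ℝ) ≤ -44 - 90*b + 358*b^2 + 289*b^4 := by nlinarith
    have q2 : (-42:ℝ) ≤ 46 - 306*b + 133*b^2 + 289*b^4 := by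
      nlinarith [sq_nonneg (b-2/3), sq_nonneg (b^2-4/9), mul_nonneg (sub_nonneg.2 hb0) (sub_nonneg.2 hb1)]
    have q3 : (0:ℝ) ≤ 40 - 126*b + 31*b^2 + 289*b^4 := by
      nlinarith [sq_nonneg (b-2/3), sq_nonneg (b^2-4/9), mul_nonneg (sub_nonneg.2 hb0) (sub_nonneg.2 hb1)]
    have q4 : (-10:ℝ) ≤ -5 + 60*b + 157*b^2 - 510*b^3 + 289*b^4 := by
      nlinarith [sq_nonneg (17*b^2-15*b+1), sq_nonneg (b-1), sq_nonneg (b-2/3)]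
    have q5 : (0:ℝ) ≤ 1 - 30*b + 259*b^2 - 510*b^3 + 289*b^4 := by
      nlinarith [sq_nonneg (17*b^2-15*b+1)]
    have q0 : (172:ℝ) ≤ -44 + 358*b^2 + 289*b^4 := by
      nlinarith [sq_nonneg (b-2/3), sq_nonneg (b^2-4/9)]
    have ht2 : t^2 ≤ 1 := by nlinarith
    have ht4 : t^4 ≤ 1 := by nlinarith
    have hQ : (0:ℝ) ≤ (-44 + 358*b^2 + 289*b^4)
        + (-44 - 90*b + 358*b^2 + 289*b^4)*t
        + (46 - 306*b + 133*b^2 + 289*b^4)*t^2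
        + (40 - 126*b + 31*b^2 + 289*b^4)*t^3
        + (-5 + 60*b + 157*b^2 - 510*b^3 + 289*b^4)*t^4
        + (1 - 30*b + 259*b^2 - 510*b^3 + 289*b^4)*t^5 := by
      nlinarith [mul_nonneg q1 ht0, mul_nonneg q3 (pow_nonneg ht0 3),
        mul_nonneg q5 (pow_nonneg ht0 5), ht2, ht4]
    nlinarith [mul_nonneg (sub_nonneg.2 ht1) (mul_nonneg hQ (sq_nonneg b))]
  calc (b*s/3 + b^2*t^2)^2 + ((3*b*r + 15*b^2*t*s + b*(1+17*b^2)*t^3)/18)^2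
      ≤ (b*(1-t^2)/3 + b^2*t^2)^2 + ((3*b*(1-t^2) + 15*b^2*t*(1-t^2) + b*(1+17*b^2)*t^3)/18)^2 := by
        gcongr <;> assumption
    _ ≤ _ := step


lemma derivs_eqOn {U : Set ℂ} (hU : IsOpen U) {A B : ℂ → ℂ} {A' B' : ℂ → ℂ}
    (h : ∀ z ∈ U, A z = B z)
    (hA : ∀ z ∈ U, HasDerivAt A (A' z) z) (hB : ∀ z ∈ U, HasDerivAt B (B' z) z) :
    ∀ z ∈ U, A' z = B' z := by
  intro z hz
  have he : A =ᶠ[nhds z] B := Filter.eventuallyEq_of_mem (hU.mem_nhds hz) h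
  rw [← (hA z hz).deriv, ← (hB z hz).deriv]
  exact he.deriv_eq


lemma mobius_norm_le {a b : ℂ} (ha : ‖a‖ ≤ 1) (hb : ‖b‖ ≤ 1) :
    ‖a - b‖ ≤ ‖1 - (starRingEnd ℂ) b * a‖ := by
  have key : Complex.normSq (1 - (starRingEnd ℂ) b * a) - Complex.normSq (a - b)
      = (1 - Complex.normSq a) * (1 - Complex.normSq b) := by
    simp only [Complex.normSq_apply, Complex.sub_re, Complex.sub_im, Complex.mul_re,
      Complex.mul_im, Complex.conj_re, Complex.conj_im, Complex.one_re, Complex.one_im]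
    ring
  have ha' : Complex.normSq a ≤ 1 := by
    rw [← Complex.sq_norm]; nlinarith [norm_nonneg a]
  have hb' : Complex.normSq b ≤ 1 := by
    rw [← Complex.sq_norm]; nlinarith [norm_nonneg b]
  have : Complex.normSq (a - b) ≤ Complex.normSq (1 - (starRingEnd ℂ) b * a) := by nlinarith
  calc ‖a - b‖ = Real.sqrt (Complex.normSq (a - b)) := by
        rw [Complex.norm_def]
    _ ≤ Real.sqrt (Complex.normSq (1 - (starRingEnd ℂ) b * a)) := Real.sqrt_le_sqrt this
    _ = _ := by rw [Complex.norm_def]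


lemma const_of_norm_eq_one {g : ℂ → ℂ} (hg : DifferentiableOn ℂ g (ball 0 1))
    (hb : ∀ z ∈ ball (0:ℂ) 1, ‖g z‖ ≤ 1) (h0 : ‖g 0‖ = 1) :
    EqOn g (fun _ => g 0) (ball (0:ℂ) 1) := by
  apply Complex.eqOn_of_isPreconnected_of_isMaxOn_norm (convex_ball 0 1).isPreconnected
    isOpen_ball hg (mem_ball_self one_pos)
  intro z hz
  simp only [Set.mem_setOf_eq, Function.comp_apply]
  calc ‖g z‖ ≤ 1 := hb z hz
    _ = ‖g 0‖ := h0.symm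


lemma conj_mul_self_eq (c : ℂ) : (starRingEnd ℂ) c * c = ((‖c‖^2 : ℝ) : ℂ) := by
  rw [mul_comm, Complex.mul_conj, Complex.normSq_eq_norm_sq]


lemma psi_facts {g : ℂ → ℂ} (hg : DifferentiableOn ℂ g (ball 0 1))
    (hb : ∀ z ∈ ball (0:ℂ) 1, ‖g z‖ ≤ 1) (hlt : ‖g 0‖ < 1) :
    ∃ ψ : ℂ → ℂ, DifferentiableOn ℂ ψ (ball 0 1) ∧ ψ 0 = 0 ∧
      (∀ z ∈ ball (0:ℂ) 1, ‖ψ z‖ ≤ 1) ∧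
      (∀ z ∈ ball (0:ℂ) 1, ψ z * (1 - (starRingEnd ℂ) (g 0) * g z) = g z - g 0) ∧
      HasDerivAt ψ (deriv g 0 / ((1:ℝ) - ‖g 0‖^2 : ℝ)) 0 := by
  have hden : ∀ z ∈ ball (0:ℂ) 1, (1 : ℂ) - (starRingEnd ℂ) (g 0) * g z ≠ 0 := by
    intro z hz h
    have h1 : ‖(starRingEnd ℂ) (g 0) * g z‖ < 1 := by
      rw [norm_mul, RCLike.norm_conj]
      calc ‖g 0‖ * ‖g z‖ ≤ ‖g 0‖ * 1 :=
            mul_le_mul_of_nonneg_left (hb z hz) (norm_nonneg _)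
        _ < 1 := by simpa using hlt
    have h2 : (starRingEnd ℂ) (g 0) * g z = 1 := by linear_combination -h
    rw [h2] at h1; simp at h1
  refine ⟨fun z => (g z - g 0) / (1 - (starRingEnd ℂ) (g 0) * g z), ?_, ?_, ?_, ?_, ?_⟩
  · exact DifferentiableOn.div (hg.sub (differentiableOn_const _))
      ((differentiableOn_const _).sub ((differentiableOn_const _).mul hg)) hden
  · simp
  · intro z hz
    rw [norm_div]
    rcases eq_or_ne (1 - (starRingEnd ℂ) (g 0) * g z) 0 with h | h
    · exact absurd h (hden z hz)
    · rw [div_le_one (norm_pos_iff.2 h)]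
      exact mobius_norm_le (hb z hz) hlt.le
  · intro z hz
    exact div_mul_cancel₀ _ (hden z hz)
  · have hgd : HasDerivAt g (deriv g 0) 0 :=
      (hg.differentiableAt (isOpen_ball.mem_nhds (mem_ball_self one_pos))).hasDerivAt
    have hnum : HasDerivAt (fun z => g z - g 0) (deriv g 0) 0 := hgd.sub_const (g 0)
    have hden' : HasDerivAt (fun z => (1:ℂ) - (starRingEnd ℂ) (g 0) * g z)
        (-((starRingEnd ℂ) (g 0) * deriv g 0)) 0 := by
      simpa using ((hgd.const_mul ((starRingEnd ℂ) (g 0))).const_sub 1)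
    have hdiv := hnum.div hden' (hden 0 (mem_ball_self one_pos))
    have hd0 : (1:ℂ) - (starRingEnd ℂ) (g 0) * g 0 = ((1:ℝ) - ‖g 0‖^2 : ℝ) := by
      rw [conj_mul_self_eq]; push_cast; ring
    refine HasDerivAt.congr_deriv (f := fun z => (g z - g 0) / (1 - (starRingEnd ℂ) (g 0) * g z)) hdiv ?_
    symm
    rw [hd0]
    have hX : (((1:ℝ) - ‖g 0‖^2 : ℝ) : ℂ) ≠ 0 := by
      simp only [ne_eq, Complex.ofReal_eq_zero]
      nlinarith [norm_nonneg (g 0)]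
    rw [sub_self, zero_mul, sub_zero]
    have haux : ∀ (d X : ℂ), X ≠ 0 → d / X = d * X / X^2 := by
      intro d X h; rw [sq]; rw [mul_div_mul_right _ _ h]
    exact haux _ _ hX


lemma le_one_of_forall_eps {x : ℝ} (h : ∀ ε : ℝ, 0 < ε → x ≤ 1 + ε) : x ≤ 1 := by
  by_contra h'
  push_neg at h'
  have := h ((x - 1)/2) (by linarith)
  linarith


lemma sp1 {g : ℂ → ℂ} (hg : DifferentiableOn ℂ g (ball 0 1))
    (hb : ∀ z ∈ ball (0:ℂ) 1, ‖g z‖ ≤ 1) : ‖deriv g 0‖ ≤ 1 - ‖g 0‖^2 := by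
  have h0le : ‖g 0‖ ≤ 1 := hb 0 (mem_ball_self one_pos)
  rcases eq_or_lt_of_le h0le with heq | hlt
  · have hc := const_of_norm_eq_one hg hb heq
    have hz : deriv g 0 = 0 := by
      have he : g =ᶠ[nhds 0] (fun _ => g 0) :=
        Filter.eventuallyEq_of_mem (isOpen_ball.mem_nhds (mem_ball_self one_pos)) hc
      rw [he.deriv_eq, deriv_const]
    rw [hz, norm_zero, heq]
    norm_num
  · obtain ⟨ψ, hψd, hψ0, hψb, hψid, hψder⟩ := psi_facts hg hb hlt
    have hmaps : ∀ ε : ℝ, 0 < ε → ‖deriv ψ 0‖ ≤ (1 + ε)/1 := by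
      intro ε hε
      apply Complex.norm_deriv_le_div_of_mapsTo_ball hψd ?_ one_pos
      intro z hz
      rw [mem_closedBall, hψ0, dist_zero_right]
      calc ‖ψ z‖ ≤ 1 := hψb z hz
        _ ≤ 1 + ε := by linarith
    have hψ1 : ‖deriv ψ 0‖ ≤ 1 := le_one_of_forall_eps (by
      intro ε hε; simpa using hmaps ε hε)
    have hder := hψder.deriv
    have hXpos : (0:ℝ) < 1 - ‖g 0‖^2 := by nlinarith [norm_nonneg (g 0)]
    have hXne : (((1:ℝ) - ‖g 0‖^2 : ℝ) : ℂ) ≠ 0 := by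
      simp only [ne_eq, Complex.ofReal_eq_zero]; linarith
    have heq2 : deriv g 0 = deriv ψ 0 * ((1:ℝ) - ‖g 0‖^2 : ℝ) := by
      rw [hder, div_mul_cancel₀ _ hXne]
    rw [heq2, norm_mul]
    calc ‖deriv ψ 0‖ * ‖(((1:ℝ) - ‖g 0‖^2 : ℝ) : ℂ)‖
        ≤ 1 * ‖(((1:ℝ) - ‖g 0‖^2 : ℝ) : ℂ)‖ := by
          apply mul_le_mul_of_nonneg_right hψ1 (norm_nonneg _)
      _ = 1 - ‖g 0‖^2 := by
          rw [one_mul, Complex.norm_real, Real.norm_eq_abs, abs_of_pos hXpos]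


lemma sp2 {g : ℂ → ℂ} (hg : DifferentiableOn ℂ g (ball 0 1))
    (hb : ∀ z ∈ ball (0:ℂ) 1, ‖g z‖ ≤ 1) :
    ‖deriv (deriv g) 0‖ ≤ 2 * (1 - ‖g 0‖^2) := by
  have h0le : ‖g 0‖ ≤ 1 := hb 0 (mem_ball_self one_pos)
  have h0 : (0:ℂ) ∈ ball (0:ℂ) 1 := mem_ball_self one_pos
  rcases eq_or_lt_of_le h0le with heq | hlt
  · -- constant case
    have hc := const_of_norm_eq_one hg hb heq
    have hder : ∀ z ∈ ball (0:ℂ) 1, deriv g z = 0 := by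
      intro z hz
      have he : g =ᶠ[nhds z] (fun _ => g 0) :=
        Filter.eventuallyEq_of_mem (isOpen_ball.mem_nhds hz) hc
      rw [he.deriv_eq, deriv_const]
    have he2 : deriv g =ᶠ[nhds 0] (fun _ => (0:ℂ)) :=
      Filter.eventuallyEq_of_mem (isOpen_ball.mem_nhds h0) hder
    rw [he2.deriv_eq, deriv_const, norm_zero]
    nlinarith [norm_nonneg (g 0)]
  · obtain ⟨ψ, hψd, hψ0, hψb, hψid, hψder⟩ := psi_facts hg hb hlt
    set χ := dslope ψ 0 with hχ
    have hχd : DifferentiableOn ℂ χ (ball 0 1) :=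
      (differentiableOn_dslope (isOpen_ball.mem_nhds h0)).2 hψd
    have hχb : ∀ z ∈ ball (0:ℂ) 1, ‖χ z‖ ≤ 1 := by
      intro z hz
      apply le_one_of_forall_eps
      intro ε hε
      have := Complex.norm_dslope_le_div_of_mapsTo_ball hψd (R₂ := 1 + ε) ?_ hz
      · simpa using this
      · intro w hw
        rw [mem_closedBall, hψ0, dist_zero_right]
        calc ‖ψ w‖ ≤ 1 := hψb w hw
          _ ≤ 1 + ε := by linarith
    -- identity: g z - g 0 = z * χ z * (1 - conj (g 0) * g z) on ball
    have hid : ∀ z ∈ ball (0:ℂ) 1,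
        g z - g 0 = z * χ z * (1 - (starRingEnd ℂ) (g 0) * g z) := by
      intro z hz
      have h1 : z * χ z = ψ z := by
        have := sub_smul_dslope ψ 0 z
        rw [sub_zero, smul_eq_mul, hψ0, sub_zero] at this
        rw [hχ, this]
      rw [h1, hψid z hz]
    -- analytic pieces
    have hga : AnalyticOnNhd ℂ g (ball 0 1) := hg.analyticOnNhd isOpen_ball
    have hχa : AnalyticOnNhd ℂ χ (ball 0 1) := hχd.analyticOnNhd isOpen_ball
    set G1 := deriv g with hG1
    set G2 := deriv G1 with hG2
    set X1 := deriv χ with hX1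
    set X2 := deriv X1 with hX2
    have hG1a : AnalyticOnNhd ℂ G1 (ball 0 1) := hga.deriv
    have hX1a : AnalyticOnNhd ℂ X1 (ball 0 1) := hχa.deriv
    have Hg : ∀ z ∈ ball (0:ℂ) 1, HasDerivAt g (G1 z) z :=
      fun z hz => (hga z hz).differentiableAt.hasDerivAt
    have HG1 : ∀ z ∈ ball (0:ℂ) 1, HasDerivAt G1 (G2 z) z :=
      fun z hz => (hG1a z hz).differentiableAt.hasDerivAt
    have Hχ : ∀ z ∈ ball (0:ℂ) 1, HasDerivAt χ (X1 z) z :=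
      fun z hz => (hχa z hz).differentiableAt.hasDerivAt
    have HX1 : ∀ z ∈ ball (0:ℂ) 1, HasDerivAt X1 (X2 z) z :=
      fun z hz => (hX1a z hz).differentiableAt.hasDerivAt
    set c := (starRingEnd ℂ) (g 0) with hcdef
    -- first differentiation
    have D1 : ∀ z ∈ ball (0:ℂ) 1, G1 z =
        (χ z + z * X1 z) * (1 - c * g z) + z * χ z * (-(c * G1 z)) := by
      apply derivs_eqOn isOpen_ball hid
      · intro z hz
        simpa using ((Hg z hz).sub_const (g 0))
      · intro z hz
        have h1 : HasDerivAt (fun w => w * χ w) (χ z + z * X1 z) z := by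
          have := (hasDerivAt_id' z).mul (Hχ z hz)
          exact this.congr_deriv (by ring)
        have h2 : HasDerivAt (fun w => (1:ℂ) - c * g w) (-(c * G1 z)) z := by
          simpa using ((Hg z hz).const_mul c).const_sub 1
        exact h1.mul h2
    -- second differentiation
    have D2 : ∀ z ∈ ball (0:ℂ) 1, G2 z =
        ((X1 z + (X1 z + z * X2 z)) * (1 - c * g z)
          + (χ z + z * X1 z) * (-(c * G1 z)))
        + ((χ z + z * X1 z) * (-(c * G1 z)) + z * χ z * (-(c * G2 z))) := by
      apply derivs_eqOn isOpen_ball D1 HG1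
      intro z hz
      have h1 : HasDerivAt (fun w => χ w + w * X1 w) (X1 z + (X1 z + z * X2 z)) z := by
        apply (Hχ z hz).add
        have := (hasDerivAt_id' z).mul (HX1 z hz)
        exact this.congr_deriv (by ring)
      have h2 : HasDerivAt (fun w => (1:ℂ) - c * g w) (-(c * G1 z)) z := by
        simpa using ((Hg z hz).const_mul c).const_sub 1
      have h3 : HasDerivAt (fun w => w * χ w) (χ z + z * X1 z) z := by
        have := (hasDerivAt_id' z).mul (Hχ z hz)
        exact this.congr_deriv (by ring)
      have h4 : HasDerivAt (fun w => -(c * G1 w)) (-(c * G2 z)) z := by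
        exact ((HG1 z hz).const_mul c).neg
      exact (h1.mul h2).add (h3.mul h4)
    -- evaluate at 0
    have hX : (1:ℂ) - c * g 0 = ((1:ℝ) - ‖g 0‖^2 : ℝ) := by
      rw [hcdef, conj_mul_self_eq]; push_cast; ring
    have e1 : G1 0 = χ 0 * ((1:ℝ) - ‖g 0‖^2 : ℝ) := by
      have := D1 0 h0
      simpa [hX] using this
    have e2 : G2 0 = 2 * X1 0 * ((1:ℝ) - ‖g 0‖^2 : ℝ)
        - 2 * χ 0 * χ 0 * c * ((1:ℝ) - ‖g 0‖^2 : ℝ) := by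
      have := D2 0 h0
      simp only [zero_mul, mul_zero, add_zero, zero_add] at this
      rw [hX] at this
      rw [this, e1]
      ring
    -- bounds
    have hχ0 : ‖χ 0‖ ≤ 1 := hχb 0 h0
    have hX10 : ‖X1 0‖ ≤ 1 - ‖χ 0‖^2 := sp1 hχd hχb
    have hgd0 : (0:ℝ) ≤ 1 - ‖g 0‖^2 := by nlinarith [norm_nonneg (g 0)]
    have hnX : ‖(((1:ℝ) - ‖g 0‖^2 : ℝ) : ℂ)‖ = 1 - ‖g 0‖^2 := by
      rw [Complex.norm_real, Real.norm_eq_abs, _root_.abs_of_nonneg hgd0]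
    have hc1 : ‖c‖ ≤ 1 := by rw [hcdef, RCLike.norm_conj]; exact h0le
    rw [e2]
    calc ‖2 * X1 0 * (((1:ℝ) - ‖g 0‖^2 : ℝ) : ℂ)
          - 2 * χ 0 * χ 0 * c * (((1:ℝ) - ‖g 0‖^2 : ℝ) : ℂ)‖
        ≤ ‖2 * X1 0 * (((1:ℝ) - ‖g 0‖^2 : ℝ) : ℂ)‖
          + ‖2 * χ 0 * χ 0 * c * (((1:ℝ) - ‖g 0‖^2 : ℝ) : ℂ)‖ := norm_sub_le _ _
      _ ≤ 2 * (1 - ‖χ 0‖^2) * (1 - ‖g 0‖^2) + 2 * (‖χ 0‖^2 * (1 - ‖g 0‖^2)) := by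
          apply add_le_add
          · rw [norm_mul, norm_mul, hnX, Complex.norm_ofNat]
            calc 2 * ‖X1 0‖ * (1 - ‖g 0‖^2)
                ≤ 2 * (1 - ‖χ 0‖^2) * (1 - ‖g 0‖^2) := by nlinarith
              _ = _ := by ring
          · rw [norm_mul, norm_mul, norm_mul, norm_mul, hnX, Complex.norm_ofNat]
            nlinarith [mul_le_mul_of_nonneg_left (mul_le_mul_of_nonneg_right hc1 hgd0)
              (mul_nonneg (norm_nonneg (χ 0)) (norm_nonneg (χ 0)))]
      _ = 2 * (1 - ‖g 0‖^2) := by ring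


lemma omega_exists (β : ℝ) (hβ0 : 0 < β) (hβ1 : β ≤ 1) (p : ℂ → ℂ)
    (hpd : DifferentiableOn ℂ p (ball 0 1))
    (hp0 : p 0 = 1)
    (harg : ∀ z ∈ ball (0:ℂ) 1, |arg (p z)| < β * Real.pi / 2) :
    ∃ ω : ℂ → ℂ, DifferentiableOn ℂ ω (ball 0 1) ∧ ω 0 = 0 ∧
      (∀ z ∈ ball (0:ℂ) 1, ‖ω z‖ < 1) ∧
      (∀ z ∈ ball (0:ℂ) 1, deriv p z * (1 - ω z ^ 2) = 2 * β * deriv ω z * p z) := by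
  have hπ : (0:ℝ) < Real.pi := Real.pi_pos
  have h0 : (0:ℂ) ∈ ball (0:ℂ) 1 := mem_ball_self one_pos
  have step1 : ∀ z ∈ ball (0:ℂ) 1, 0 < (p z).re ∨ p z = 0 := by
    intro z hz
    have h1 : |arg (p z)| < Real.pi / 2 := by
      calc |arg (p z)| < β * Real.pi / 2 := harg z hz
        _ ≤ Real.pi / 2 := by nlinarith
    exact abs_arg_lt_pi_div_two_iff.1 h1
  have step2 : ∀ z ∈ ball (0:ℂ) 1, 0 < (p z).re := by
    intro z hz
    rcases step1 z hz with h | h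
    · exact h
    · exfalso
      have hmax : IsMaxOn (norm ∘ (fun w => Complex.exp (-p w))) (ball (0:ℂ) 1) z := by
        intro w hw
        simp only [Function.comp_apply, Set.mem_setOf_eq, Complex.norm_exp]
        rw [h]
        simp only [neg_re, zero_re, neg_zero, Real.exp_zero]
        rcases step1 w hw with h2 | h2
        · exact Real.exp_le_one_iff.2 (by simp [neg_re]; linarith)
        · rw [h2]; simp
      have hd : DifferentiableOn ℂ (fun w => Complex.exp (-p w)) (ball (0:ℂ) 1) :=
        (hpd.neg).cexp
      have hconst := Complex.eqOn_of_isPreconnected_of_isMaxOn_norm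
        (convex_ball (0:ℂ) 1).isPreconnected isOpen_ball hd hz hmax h0
      simp only at hconst
      have : Complex.exp (-p 0) = Complex.exp (-p z) := hconst
      rw [hp0, h, neg_zero, Complex.exp_zero] at this
      have hn : ‖Complex.exp (-1)‖ = 1 := by rw [this]; simp
      rw [Complex.norm_exp] at hn
      simp only [neg_re, one_re] at hn
      have := Real.exp_lt_one_iff.2 (by norm_num : (-1:ℝ) < 0)
      linarith
  have hpne : ∀ z ∈ ball (0:ℂ) 1, p z ≠ 0 := by
    intro z hz h
    have := step2 z hz
    rw [h] at this; simp at this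
  have hslit : ∀ z ∈ ball (0:ℂ) 1, 0 < (p z).re ∨ (p z).im ≠ 0 :=
    fun z hz => Or.inl (step2 z hz)
  set L := fun z => Complex.log (p z) with hL
  set q := fun z => Complex.exp ((β⁻¹ : ℂ) * L z) with hq
  have hLim : ∀ z ∈ ball (0:ℂ) 1, ((β⁻¹ : ℂ) * L z).im = β⁻¹ * arg (p z) := by
    intro z hz
    rw [Complex.mul_im]
    simp [hL, Complex.log_im]
  have hqre : ∀ z ∈ ball (0:ℂ) 1, 0 < (q z).re := by
    intro z hz
    rw [hq]
    simp only []
    rw [Complex.exp_re]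
    apply mul_pos (Real.exp_pos _)
    apply Real.cos_pos_of_mem_Ioo
    rw [hLim z hz]
    have habs : |β⁻¹ * arg (p z)| < Real.pi / 2 := by
      rw [abs_mul, abs_of_pos (inv_pos.2 hβ0)]
      calc β⁻¹ * |arg (p z)| < β⁻¹ * (β * Real.pi / 2) :=
            mul_lt_mul_of_pos_left (harg z hz) (inv_pos.2 hβ0)
        _ = Real.pi / 2 := by field_simp
    exact abs_lt.1 habs
  have hq0 : q 0 = 1 := by
    rw [hq]
    simp only []
    rw [hL]
    simp only []
    rw [hp0, Complex.log_one, mul_zero, Complex.exp_zero]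
  have hqder : ∀ z ∈ ball (0:ℂ) 1,
      HasDerivAt q ((β⁻¹ : ℂ) * (deriv p z / p z) * q z) z := by
    intro z hz
    have hp' : HasDerivAt p (deriv p z) z :=
      (hpd.differentiableAt (isOpen_ball.mem_nhds hz)).hasDerivAt
    have hLd : HasDerivAt L (deriv p z / p z) z := hp'.clog (hslit z hz)
    have := (hLd.const_mul ((β⁻¹ : ℂ))).cexp
    simpa [hq, mul_comm] using this
  have hqd : DifferentiableOn ℂ q (ball 0 1) := fun z hz =>
    ((hqder z hz).differentiableAt.differentiableWithinAt)
  have hqne : ∀ z ∈ ball (0:ℂ) 1, q z + 1 ≠ 0 := by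
    intro z hz h
    have h1 : (q z + 1).re = 0 := by rw [h]; simp
    rw [Complex.add_re, Complex.one_re] at h1
    have := hqre z hz
    linarith
  refine ⟨fun z => (q z - 1) / (q z + 1), ?_, ?_, ?_, ?_⟩
  · exact DifferentiableOn.div (hqd.sub (differentiableOn_const _))
      (hqd.add (differentiableOn_const _)) hqne
  · show (q 0 - 1) / (q 0 + 1) = 0
    rw [hq0]; simp
  · intro z hz
    rw [norm_div, div_lt_one (norm_pos_iff.2 (hqne z hz))]
    have key : Complex.normSq (q z + 1) - Complex.normSq (q z - 1) = 4 * (q z).re := by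
      simp only [Complex.normSq_apply, Complex.add_re, Complex.add_im, Complex.sub_re,
        Complex.sub_im, Complex.one_re, Complex.one_im]
      ring
    have h2 : Complex.normSq (q z - 1) < Complex.normSq (q z + 1) := by
      have := hqre z hz; linarith
    calc ‖q z - 1‖ = Real.sqrt (Complex.normSq (q z - 1)) := by
          rw [Complex.norm_def]
      _ < Real.sqrt (Complex.normSq (q z + 1)) :=
          Real.sqrt_lt_sqrt (Complex.normSq_nonneg _) h2
      _ = ‖q z + 1‖ := by rw [Complex.norm_def]
  · intro z hz
    have hp' : HasDerivAt p (deriv p z) z :=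
      (hpd.differentiableAt (isOpen_ball.mem_nhds hz)).hasDerivAt
    have hq' := hqder z hz
    have hωd : HasDerivAt (fun w => (q w - 1) / (q w + 1))
        ((((β⁻¹ : ℂ) * (deriv p z / p z) * q z) * (q z + 1)
          - (q z - 1) * ((β⁻¹ : ℂ) * (deriv p z / p z) * q z)) / (q z + 1)^2) z := by
      exact (hq'.sub_const 1).div (hq'.add_const 1) (hqne z hz)
    rw [hωd.deriv]
    have hqnz : q z ≠ 0 := Complex.exp_ne_zero _
    have hβne : ((β:ℂ)) ≠ 0 := by
      simp only [ne_eq, Complex.ofReal_eq_zero]; linarith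
    field_simp [hpne z hz, hqne z hz]
    ring


set_option maxHeartbeats 2000000 in
/-- If `β ∈ [2/3, 1]` and `f` is strongly convex of order `β`
on the unit disk, then `|a₃² − a₄²| ≤ β⁴ + β²(1 + 17β²)²/324`. -/
theorem toeplitz_T23_strongly_convex
    (β : ℝ) (hβ0 : 2/3 ≤ β) (hβ1 : β ≤ 1)
    (f : ℂ → ℂ)
    (hfd : DifferentiableOn ℂ f (ball 0 1))
    (hf0 : f 0 = 0) (hf1 : deriv f 0 = 1)
    (hf' : ∀ z ∈ ball (0:ℂ) 1, deriv f z ≠ 0)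
    (hcv : ∀ z ∈ ball (0:ℂ) 1,
      |Complex.arg (1 + z * iteratedDeriv 2 f z / deriv f z)| < β * Real.pi / 2)
    (a : ℕ → ℂ) (ha : ∀ n, a n = iteratedDeriv n f 0 / (n.factorial : ℂ)) :
    ‖(a 3)^2 - (a 4)^2‖ ≤ β^4 + β^2 * (1 + 17 * β^2)^2 / 324 := by
  have h0 : (0:ℂ) ∈ ball (0:ℂ) 1 := mem_ball_self one_pos
  have hβpos : (0:ℝ) < β := by linarith
  -- derivative towers of f
  have hfa : AnalyticOnNhd ℂ f (ball 0 1) := hfd.analyticOnNhd isOpen_ball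
  set F1 := deriv f with hF1def
  set F2 := deriv F1 with hF2def
  set F3 := deriv F2 with hF3def
  set F4 := deriv F3 with hF4def
  set F5 := deriv F4 with hF5def
  have hF1a : AnalyticOnNhd ℂ F1 (ball 0 1) := hfa.deriv
  have hF2a : AnalyticOnNhd ℂ F2 (ball 0 1) := hF1a.deriv
  have hF3a : AnalyticOnNhd ℂ F3 (ball 0 1) := hF2a.deriv
  have hF4a : AnalyticOnNhd ℂ F4 (ball 0 1) := hF3a.deriv
  have HF1 : ∀ z ∈ ball (0:ℂ) 1, HasDerivAt F1 (F2 z) z :=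
    fun z hz => (hF1a z hz).differentiableAt.hasDerivAt
  have HF2 : ∀ z ∈ ball (0:ℂ) 1, HasDerivAt F2 (F3 z) z :=
    fun z hz => (hF2a z hz).differentiableAt.hasDerivAt
  have HF3 : ∀ z ∈ ball (0:ℂ) 1, HasDerivAt F3 (F4 z) z :=
    fun z hz => (hF3a z hz).differentiableAt.hasDerivAt
  have HF4 : ∀ z ∈ ball (0:ℂ) 1, HasDerivAt F4 (F5 z) z :=
    fun z hz => (hF4a z hz).differentiableAt.hasDerivAt
  have hiter2 : iteratedDeriv 2 f = F2 := by
    rw [hF2def, hF1def, show (2:ℕ) = 1 + 1 by rfl, iteratedDeriv_succ, iteratedDeriv_one]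
  have hiter3 : iteratedDeriv 3 f = F3 := by
    rw [hF3def, ← hiter2, show (3:ℕ) = 2 + 1 by rfl, iteratedDeriv_succ]
  have hiter4 : iteratedDeriv 4 f = F4 := by
    rw [hF4def, ← hiter3, show (4:ℕ) = 3 + 1 by rfl, iteratedDeriv_succ]
  -- the function p
  set p := fun z : ℂ => 1 + z * F2 z / F1 z with hpdef
  have hpd : DifferentiableOn ℂ p (ball 0 1) := by
    apply DifferentiableOn.const_add
    exact DifferentiableOn.div
      ((differentiableOn_id).mul (hF2a.differentiableOn))
      (hF1a.differentiableOn) hf'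
  have hp0 : p 0 = 1 := by simp [hpdef]
  have harg : ∀ z ∈ ball (0:ℂ) 1, |arg (p z)| < β * Real.pi / 2 := by
    intro z hz
    have := hcv z hz
    rw [hiter2] at this
    exact this
  obtain ⟨ω, hωd, hω0, hωlt, hII⟩ := omega_exists β hβpos hβ1 p hpd hp0 harg
  -- towers for p and ω
  have hpa : AnalyticOnNhd ℂ p (ball 0 1) := hpd.analyticOnNhd isOpen_ball
  have hωa : AnalyticOnNhd ℂ ω (ball 0 1) := hωd.analyticOnNhd isOpen_ball
  set P1 := deriv p with hP1def
  set P2 := deriv P1 with hP2def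
  set P3 := deriv P2 with hP3def
  set W1 := deriv ω with hW1def
  set W2 := deriv W1 with hW2def
  set W3 := deriv W2 with hW3def
  have hP1a : AnalyticOnNhd ℂ P1 (ball 0 1) := hpa.deriv
  have hP2a : AnalyticOnNhd ℂ P2 (ball 0 1) := hP1a.deriv
  have hW1a : AnalyticOnNhd ℂ W1 (ball 0 1) := hωa.deriv
  have hW2a : AnalyticOnNhd ℂ W2 (ball 0 1) := hW1a.deriv
  have Hp : ∀ z ∈ ball (0:ℂ) 1, HasDerivAt p (P1 z) z :=
    fun z hz => (hpa z hz).differentiableAt.hasDerivAt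
  have HP1 : ∀ z ∈ ball (0:ℂ) 1, HasDerivAt P1 (P2 z) z :=
    fun z hz => (hP1a z hz).differentiableAt.hasDerivAt
  have HP2 : ∀ z ∈ ball (0:ℂ) 1, HasDerivAt P2 (P3 z) z :=
    fun z hz => (hP2a z hz).differentiableAt.hasDerivAt
  have Hω : ∀ z ∈ ball (0:ℂ) 1, HasDerivAt ω (W1 z) z :=
    fun z hz => (hωa z hz).differentiableAt.hasDerivAt
  have HW1 : ∀ z ∈ ball (0:ℂ) 1, HasDerivAt W1 (W2 z) z :=
    fun z hz => (hW1a z hz).differentiableAt.hasDerivAt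
  have HW2 : ∀ z ∈ ball (0:ℂ) 1, HasDerivAt W2 (W3 z) z :=
    fun z hz => (hW2a z hz).differentiableAt.hasDerivAt
  have Hf : ∀ z ∈ ball (0:ℂ) 1, HasDerivAt f (F1 z) z :=
    fun z hz => (hfa z hz).differentiableAt.hasDerivAt
  -- identity I
  have hI : ∀ z ∈ ball (0:ℂ) 1, z * F2 z = (p z - 1) * F1 z := by
    intro z hz
    have h1 : p z - 1 = z * F2 z / F1 z := by rw [hpdef]; ring
    rw [h1, div_mul_cancel₀ _ (hf' z hz)]
  -- differentiate identity I three times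
  have I1 : ∀ z ∈ ball (0:ℂ) 1,
      F2 z + z * F3 z = (P1 z * F1 z + (p z - 1) * F2 z) := by
    apply derivs_eqOn isOpen_ball hI
    · intro z hz
      exact ((hasDerivAt_id' z).mul (HF2 z hz)).congr_deriv (by ring)
    · intro z hz
      exact ((Hp z hz).sub_const 1).mul (HF1 z hz)
  have I2 : ∀ z ∈ ball (0:ℂ) 1,
      (F3 z + (F3 z + z * F4 z)) =
      ((P2 z * F1 z + P1 z * F2 z) + (P1 z * F2 z + (p z - 1) * F3 z)) := by
    apply derivs_eqOn isOpen_ball I1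
    · intro z hz
      exact (HF2 z hz).add (by exact ((hasDerivAt_id' z).mul (HF3 z hz)).congr_deriv (by ring))
    · intro z hz
      exact ((HP1 z hz).mul (HF1 z hz)).add (((Hp z hz).sub_const 1).mul (HF2 z hz))
  have I3 : ∀ z ∈ ball (0:ℂ) 1,
      (F4 z + (F4 z + (F4 z + z * F5 z))) =
      (((P3 z * F1 z + P2 z * F2 z) + (P2 z * F2 z + P1 z * F3 z))
        + ((P2 z * F2 z + P1 z * F3 z) + (P1 z * F3 z + (p z - 1) * F4 z))) := by
    apply derivs_eqOn isOpen_ball I2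
    · intro z hz
      exact (HF3 z hz).add ((HF3 z hz).add
        (by exact ((hasDerivAt_id' z).mul (HF4 z hz)).congr_deriv (by ring)))
    · intro z hz
      exact (((HP2 z hz).mul (HF1 z hz)).add ((HP1 z hz).mul (HF2 z hz))).add
        (((HP1 z hz).mul (HF2 z hz)).add (((Hp z hz).sub_const 1).mul (HF3 z hz)))
  -- identity II, cleaned form
  have hII' : ∀ z ∈ ball (0:ℂ) 1,
      P1 z * (1 - ω z * ω z) = 2 * (β:ℂ) * W1 z * p z :=
    fun z hz => by linear_combination (hII z hz)
  have II1 : ∀ z ∈ ball (0:ℂ) 1,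
      P2 z * (1 - ω z * ω z) + P1 z * (-(W1 z * ω z + ω z * W1 z))
        = 2 * (β:ℂ) * W2 z * p z + 2 * (β:ℂ) * W1 z * P1 z := by
    apply derivs_eqOn isOpen_ball hII'
    · intro z hz
      exact (HP1 z hz).mul (((Hω z hz).mul (Hω z hz)).const_sub 1)
    · intro z hz
      exact ((HW1 z hz).const_mul (2 * (β:ℂ))).mul (Hp z hz)
  have II2 : ∀ z ∈ ball (0:ℂ) 1,
      (P3 z * (1 - ω z * ω z) + P2 z * (-(W1 z * ω z + ω z * W1 z)))
        + (P2 z * (-(W1 z * ω z + ω z * W1 z))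
          + P1 z * (-((W2 z * ω z + W1 z * W1 z) + (W1 z * W1 z + ω z * W2 z))))
      = (2 * (β:ℂ) * W3 z * p z + 2 * (β:ℂ) * W2 z * P1 z)
        + (2 * (β:ℂ) * W2 z * P1 z + 2 * (β:ℂ) * W1 z * P2 z) := by
    apply derivs_eqOn isOpen_ball II1
    · intro z hz
      exact ((HP2 z hz).mul (((Hω z hz).mul (Hω z hz)).const_sub 1)).add
        ((HP1 z hz).mul ((((HW1 z hz).mul (Hω z hz)).add ((Hω z hz).mul (HW1 z hz))).neg))
    · intro z hz
      exact (((HW2 z hz).const_mul (2 * (β:ℂ))).mul (Hp z hz)).add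
        (((HW1 z hz).const_mul (2 * (β:ℂ))).mul (HP1 z hz))
  -- the dslope function φ
  set φ := dslope ω 0 with hφdef
  have hφd : DifferentiableOn ℂ φ (ball 0 1) :=
    (differentiableOn_dslope (isOpen_ball.mem_nhds h0)).2 hωd
  have hφb : ∀ z ∈ ball (0:ℂ) 1, ‖φ z‖ ≤ 1 := by
    intro z hz
    have := Complex.norm_dslope_le_div_of_mapsTo_ball hωd (R₂ := 1) ?_ hz
    · simpa using this
    · intro w hw
      rw [mem_closedBall, hω0, dist_zero_right]
      exact (hωlt w hw).le
  have hφa : AnalyticOnNhd ℂ φ (ball 0 1) := hφd.analyticOnNhd isOpen_ball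
  set X1 := deriv φ with hX1def
  set X2 := deriv X1 with hX2def
  set X3 := deriv X2 with hX3def
  have hX1a : AnalyticOnNhd ℂ X1 (ball 0 1) := hφa.deriv
  have hX2a : AnalyticOnNhd ℂ X2 (ball 0 1) := hX1a.deriv
  have Hφ : ∀ z ∈ ball (0:ℂ) 1, HasDerivAt φ (X1 z) z :=
    fun z hz => (hφa z hz).differentiableAt.hasDerivAt
  have HX1 : ∀ z ∈ ball (0:ℂ) 1, HasDerivAt X1 (X2 z) z :=
    fun z hz => (hX1a z hz).differentiableAt.hasDerivAt
  have HX2 : ∀ z ∈ ball (0:ℂ) 1, HasDerivAt X2 (X3 z) z :=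
    fun z hz => (hX2a z hz).differentiableAt.hasDerivAt
  have hJ : ∀ z ∈ ball (0:ℂ) 1, z * φ z = ω z := by
    intro z hz
    have := sub_smul_dslope ω 0 z
    rw [sub_zero, smul_eq_mul, hω0, sub_zero] at this
    rw [hφdef, this]
  have J1 : ∀ z ∈ ball (0:ℂ) 1, φ z + z * X1 z = W1 z := by
    apply derivs_eqOn isOpen_ball hJ
    · intro z hz
      exact ((hasDerivAt_id' z).mul (Hφ z hz)).congr_deriv (by ring)
    · exact Hω
  have J2 : ∀ z ∈ ball (0:ℂ) 1, X1 z + (X1 z + z * X2 z) = W2 z := by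
    apply derivs_eqOn isOpen_ball J1
    · intro z hz
      exact (Hφ z hz).add (by exact ((hasDerivAt_id' z).mul (HX1 z hz)).congr_deriv (by ring))
    · exact HW1
  have J3 : ∀ z ∈ ball (0:ℂ) 1, X2 z + (X2 z + (X2 z + z * X3 z)) = W3 z := by
    apply derivs_eqOn isOpen_ball J2
    · intro z hz
      exact (HX1 z hz).add ((HX1 z hz).add
        (by exact ((hasDerivAt_id' z).mul (HX2 z hz)).congr_deriv (by ring)))
    · exact HW2
  -- evaluate everything at 0
  have E_I1 := I1 0 h0
  have E_I2 := I2 0 h0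
  have E_I3 := I3 0 h0
  have E_II0 := hII' 0 h0
  have E_II1 := II1 0 h0
  have E_II2 := II2 0 h0
  have E_J1 := J1 0 h0
  have E_J2 := J2 0 h0
  have E_J3 := J3 0 h0
  rw [hp0] at E_I1 E_I2 E_I3 E_II0 E_II1 E_II2
  rw [hω0] at E_II0 E_II1 E_II2
  rw [hf1] at E_I1 E_I2 E_I3
  simp only [zero_mul, mul_zero, mul_one, one_mul, add_zero, zero_add, sub_self,
    neg_zero, sub_zero, neg_add_rev] at E_I1 E_I2 E_I3 E_II0 E_II1 E_II2 E_J1 E_J2 E_J3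
  -- E_I1 : F2 0 = P1 0 ; E_II0 : P1 0 = 2 β W1 0 etc.
  have v1 : P1 0 = 2 * (β:ℂ) * W1 0 := by linear_combination E_II0
  have v2 : F2 0 = 2 * (β:ℂ) * W1 0 := by linear_combination E_I1 + v1
  have v3 : P2 0 = 2 * (β:ℂ) * W2 0 + 4 * (β:ℂ)^2 * (W1 0)^2 := by
    have h := E_II1
    rw [v1] at h
    linear_combination h
  have v4 : F3 0 = (β:ℂ) * W2 0 + 6 * (β:ℂ)^2 * (W1 0)^2 := by
    have h := E_I2
    rw [v3, v1, v2] at h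
    linear_combination h / 2
  have v5 : P3 0 = 2 * (β:ℂ) * W3 0 + 12 * (β:ℂ)^2 * W1 0 * W2 0
      + (4 * (β:ℂ) + 8 * (β:ℂ)^3) * (W1 0)^3 := by
    have h := E_II2
    rw [v1, v3] at h
    linear_combination h
  have v6 : F4 0 = (2 * (β:ℂ) * W3 0 + 30 * (β:ℂ)^2 * W1 0 * W2 0
      + (4 * (β:ℂ) + 68 * (β:ℂ)^3) * (W1 0)^3) / 3 := by
    have h := E_I3
    rw [v5, v3, v1, v2, v4] at h
    linear_combination h / 3
  -- replace W's by φ-data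
  have u1 : W1 0 = φ 0 := by linear_combination - E_J1
  have u2 : W2 0 = 2 * X1 0 := by linear_combination - E_J2
  have u3 : W3 0 = 3 * X2 0 := by linear_combination - E_J3
  -- coefficient formulas
  have ha3 : a 3 = ((β/3 : ℝ):ℂ) * X1 0 + (((β^2 : ℝ)):ℂ) * (φ 0)^2 := by
    rw [ha 3, hiter3]
    have : (((3:ℕ).factorial : ℕ) : ℂ) = 6 := by norm_num [Nat.factorial]
    rw [this, v4, u1, u2]
    push_cast
    ring
  have ha4 : a 4 = ((β/12 : ℝ):ℂ) * X2 0 + ((5*β^2/6 : ℝ):ℂ) * (φ 0 * X1 0)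
      + ((β*(1+17*β^2)/18 : ℝ):ℂ) * (φ 0)^3 := by
    rw [ha 4, hiter4]
    have : (((4:ℕ).factorial : ℕ) : ℂ) = 24 := by norm_num [Nat.factorial]
    rw [this, v6, u1, u2, u3]
    push_cast
    ring
  -- norms
  set t := ‖φ 0‖ with htdef
  set s := ‖X1 0‖ with hsdef
  have ht0 : 0 ≤ t := norm_nonneg _
  have hs0 : 0 ≤ s := norm_nonneg _
  have ht1 : t ≤ 1 := hφb 0 h0
  have hs1 : s ≤ 1 - t^2 := sp1 hφd hφb
  have hr2 : ‖X2 0‖ ≤ 2*(1 - t^2) := by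
    have := sp2 hφd hφb
    rw [← hX1def, ← hX2def] at this
    linarith [this]
  set r := ‖X2 0‖ / 2 with hrdef
  have hr0 : 0 ≤ r := by positivity
  have hr1 : r ≤ 1 - t^2 := by rw [hrdef]; linarith
  have hna3 : ‖a 3‖ ≤ β*s/3 + β^2*t^2 := by
    rw [ha3]
    calc ‖((β/3 : ℝ):ℂ) * X1 0 + (((β^2 : ℝ)):ℂ) * (φ 0)^2‖
        ≤ ‖((β/3 : ℝ):ℂ) * X1 0‖ + ‖(((β^2 : ℝ)):ℂ) * (φ 0)^2‖ := norm_add_le _ _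
      _ = |β/3| * s + |β^2| * t^2 := by
          rw [norm_mul, norm_mul, Complex.norm_real, Complex.norm_real,
            Real.norm_eq_abs, Real.norm_eq_abs, norm_pow]
      _ = β*s/3 + β^2*t^2 := by
          rw [abs_of_pos (by linarith : (0:ℝ) < β/3), abs_of_pos (by positivity : (0:ℝ) < β^2)]
          ring
  have hna4 : ‖a 4‖ ≤ (3*β*r + 15*β^2*t*s + β*(1+17*β^2)*t^3)/18 := by
    rw [ha4]
    have c1 : (0:ℝ) < β/12 := by linarith
    have c2 : (0:ℝ) < 5*β^2/6 := by positivity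
    have c3 : (0:ℝ) < β*(1+17*β^2)/18 := by positivity
    calc ‖((β/12 : ℝ):ℂ) * X2 0 + ((5*β^2/6 : ℝ):ℂ) * (φ 0 * X1 0)
          + ((β*(1+17*β^2)/18 : ℝ):ℂ) * (φ 0)^3‖
        ≤ ‖((β/12 : ℝ):ℂ) * X2 0 + ((5*β^2/6 : ℝ):ℂ) * (φ 0 * X1 0)‖
          + ‖((β*(1+17*β^2)/18 : ℝ):ℂ) * (φ 0)^3‖ := norm_add_le _ _
      _ ≤ (‖((β/12 : ℝ):ℂ) * X2 0‖ + ‖((5*β^2/6 : ℝ):ℂ) * (φ 0 * X1 0)‖)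
          + ‖((β*(1+17*β^2)/18 : ℝ):ℂ) * (φ 0)^3‖ := by
            gcongr
            exact norm_add_le _ _
      _ = |β/12| * ‖X2 0‖ + |5*β^2/6| * (t*s) + |β*(1+17*β^2)/18| * t^3 := by
          simp only [norm_mul, norm_pow, Complex.norm_real, Real.norm_eq_abs]
          rfl
      _ ≤ (β/12) * (2*r) + (5*β^2/6) * (t*s) + (β*(1+17*β^2)/18) * t^3 := by
          rw [abs_of_pos c1, abs_of_pos c2, abs_of_pos c3, hrdef]
          apply le_of_eq
          ring
      _ = (3*β*r + 15*β^2*t*s + β*(1+17*β^2)*t^3)/18 := by ring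
  -- final assembly
  calc ‖(a 3)^2 - (a 4)^2‖ ≤ ‖(a 3)^2‖ + ‖(a 4)^2‖ := norm_sub_le _ _
    _ = ‖a 3‖^2 + ‖a 4‖^2 := by rw [norm_pow, norm_pow]
    _ ≤ (β*s/3 + β^2*t^2)^2 + ((3*β*r + 15*β^2*t*s + β*(1+17*β^2)*t^3)/18)^2 := by
        apply add_le_add
        · exact pow_le_pow_left₀ (norm_nonneg _) hna3 2
        · exact pow_le_pow_left₀ (norm_nonneg _) hna4 2
    _ ≤ β^4 + β^2*(1+17*β^2)^2/324 :=
        key_ineq β t s r hβ0 hβ1 ht0 ht1 hs0 hs1 hr0 hr1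
    _ = β^4 + β^2 * (1 + 17 * β^2)^2 / 324 := by ring
end
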